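/- arXiv:1806.11265 — 13 statements merged into one kernel-verified Lean document; each statement's English description precedes it below -/
import Mathlib

section
/- If a graph G is proportionally k-choosable, then G is proportionally (k+1)-choosable. -/
open Finset

variable {V : Type*}

/-- The size of the color class of `c` under coloring `f`. -/
def colorClass [Fintype V] (f : V → ℕ) (c : ℕ) : ℕ :=
  (Finset.univ.filter fun v => f v = c).card

/-- The multiplicity of color `c` in the list assignment `L`. -/
def eta [Fintype V] (L : V → Finset ℕ) (c : ℕ) : ℕ :=
  (Finset.univ.filter fun v => c ∈ L v).card

/-- `f` is a proper `L`-coloring of `G`. -/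
def IsProperListColoring (G : SimpleGraph V) (L : V → Finset ℕ) (f : V → ℕ) : Prop :=
  (∀ v, f v ∈ L v) ∧ ∀ u v, G.Adj u v → f u ≠ f v

/-- `f` is a proportional `L`-coloring of `G`, for `k`-assignments `L`:
each palette color's class has size `⌊η/k⌋` or `⌈η/k⌉`. -/
def IsProportionalColoring [Fintype V] (G : SimpleGraph V) (L : V → Finset ℕ) (k : ℕ)
    (f : V → ℕ) : Prop :=
  IsProperListColoring G L f ∧
  ∀ c : ℕ, (∃ v, c ∈ L v) →
    colorClass f c = eta L c / k ∨ colorClass f c = (eta L c + k - 1) / k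

/-- `G` is proportionally `k`-choosable. -/
def ProportionallyChoosable [Fintype V] (G : SimpleGraph V) (k : ℕ) : Prop :=
  ∀ L : V → Finset ℕ, (∀ v, (L v).card = k) →
    ∃ f : V → ℕ, IsProportionalColoring G L k f

/-!
Let `L` be a `(k+1)`-assignment and `η c = eta L c`. It suffices to pick one colour `g v ∈ L v`
per vertex so that the number `x c` of vertices picking `c` satisfies
`η c - ⌈η c/(k+1)⌉ k ≤ x c ≤ η c - ⌊η c/(k+1)⌋ k`: deleting `g v` from `L v` leaves a
`k`-assignment with `eta = η c - x c ∈ [⌊η c/(k+1)⌋ k, ⌈η c/(k+1)⌉ k]`, so the rounded shares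
of a proportional colouring for it are rounded shares of `η c` by `k + 1`.

Both bounds are met by the uniform fractional choice (weight `1/(k+1)` on each colour of each
list), and Hall's theorem rounds it: match the vertices, together with `∑ up - |V|` dummy
vertices, into the slots `(c, j)`, `j < up c`, where dummies may only take slots with
`j ≥ lo c`. The matching fills every slot, so all slots `j < lo c` go to genuine vertices.
-/

def IsRoundedDiv (n a k : ℕ) : Prop :=
  n = a / k ∨ n = (a + k - 1) / k

lemma le_mul_sub_mul {η q k : ℕ} (h : q * (k + 1) ≤ η) : η ≤ (k + 1) * (η - q * k) := by
  obtain ⟨r, rfl⟩ := Nat.exists_eq_add_of_le h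
  rw [show q * (k + 1) + r - q * k = q + r by rw [mul_add_one]; omega]
  nlinarith

lemma mul_sub_mul_le {η q k : ℕ} (h : η ≤ q * (k + 1)) : (k + 1) * (η - q * k) ≤ η := by
  rcases le_total η (q * k) with h' | h'
  · simp [Nat.sub_eq_zero_of_le h']
  · obtain ⟨r, rfl⟩ := Nat.exists_eq_add_of_le h'
    rw [Nat.add_sub_cancel_left]
    nlinarith

lemma IsRoundedDiv.succ_of_sub {k η x n : ℕ} (hk : 0 < k)
    (hlo : η - (η + k) / (k + 1) * k ≤ x) (hup : x ≤ η - η / (k + 1) * k)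
    (hn : IsRoundedDiv n (η - x) k) : IsRoundedDiv n η (k + 1) := by
  have hfloor : η / (k + 1) ≤ (η - x) / k := by
    rw [Nat.le_div_iff_mul_le hk]
    have := Nat.div_mul_le_self η (k + 1)
    rw [mul_add_one] at this
    generalize η / (k + 1) = q at hup this ⊢
    omega
  have hceil : (η - x + k - 1) / k ≤ (η + k) / (k + 1) := by
    rw [← Nat.lt_succ_iff, Nat.div_lt_iff_lt_mul hk, Nat.succ_mul]
    generalize (η + k) / (k + 1) * k = b at hlo ⊢
    omega
  have hmono : (η - x) / k ≤ (η - x + k - 1) / k := Nat.div_le_div_right (by omega)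
  have hgap : (η + k) / (k + 1) ≤ η / (k + 1) + 1 := by
    rw [← Nat.add_div_right _ k.add_one_pos]
    exact Nat.div_le_div_right (by omega)
  have hbetween : ∀ m, η / (k + 1) ≤ m → m ≤ (η + k) / (k + 1) →
      m = η / (k + 1) ∨ m = (η + k) / (k + 1) := fun m h₁ h₂ => by omega
  unfold IsRoundedDiv
  rw [show η + (k + 1) - 1 = η + k by omega]
  rcases hn with rfl | rfl
  · exact hbetween _ hfloor (hmono.trans hceil)
  · exact hbetween _ (hfloor.trans hmono) hceil

section Colorings

variable [Fintype V]

lemma IsProportionalColoring.isRoundedDiv {G : SimpleGraph V} {L : V → Finset ℕ} {k : ℕ}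
    {f : V → ℕ} (hf : IsProportionalColoring G L k f) (c : ℕ) :
    IsRoundedDiv (colorClass f c) (eta L c) k := by
  by_cases hc : ∃ v, c ∈ L v
  · exact hf.2 c hc
  · push Not at hc
    have hf0 : colorClass f c = 0 := by
      simp only [colorClass, card_eq_zero, filter_eq_empty_iff, mem_univ, true_implies]
      exact fun v hv => hc v (hv ▸ hf.1.1 v)
    have hη0 : eta L c = 0 := by simp [eta, hc]
    simp [IsRoundedDiv, hf0, hη0]

lemma eta_eq_colorClass_add_eta_erase {L : V → Finset ℕ} {g : V → ℕ} (hg : ∀ v, g v ∈ L v)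
    (c : ℕ) : eta L c = colorClass g c + eta (fun v => (L v).erase (g v)) c := by
  classical
  unfold eta colorClass
  rw [← card_union_of_disjoint (disjoint_filter.2 fun v _ h h' => (mem_erase.1 h').1 h.symm)]
  congr 1
  ext v
  simp only [mem_filter, mem_univ, true_and, mem_union, mem_erase]
  constructor
  · intro hc
    by_cases h : g v = c
    · exact .inl h
    · exact .inr ⟨Ne.symm h, hc⟩
  · rintro (h | h)
    · exact h ▸ hg v
    · exact h.2

lemma sum_eta_eq_sum_card_inter (L : V → Finset ℕ) (S : Finset ℕ) :
    ∑ c ∈ S, eta L c = ∑ v, #(S ∩ L v) := by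
  simp only [eta, card_filter]
  rw [sum_comm]
  simp only [← card_filter, filter_mem_eq_inter]

section Hall

variable (L : V → Finset ℕ) (lo up : ℕ → ℕ)

def choiceSlots (M : ℕ) : V ⊕ Fin M → Finset (Σ _ : ℕ, ℕ) :=
  Sum.elim (fun v => (L v).sigma fun c => range (up c))
    fun _ => (univ.biUnion L).sigma fun c => Ico (lo c) (up c)

variable {L lo up}

lemma card_le_card_biUnion_choiceSlots (hle : ∀ c, lo c ≤ up c)
    (hup : ∀ A : Finset V, #A ≤ ∑ c ∈ A.biUnion L, up c)
    (hlo : ∀ A : Finset V, #A + ∑ c ∈ univ.biUnion L \ A.biUnion L, lo c ≤ Fintype.card V)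
    (s : Finset (V ⊕ Fin (∑ c ∈ univ.biUnion L, up c - Fintype.card V))) :
    #s ≤ #(s.biUnion (choiceSlots L lo up _)) := by
  set C := s.toLeft.biUnion L
  have hsub : C.sigma (fun c => range (up c)) ⊆ s.biUnion (choiceSlots L lo up _) := by
    intro p hp
    simp only [mem_sigma, C, mem_biUnion, mem_toLeft, mem_range] at hp
    obtain ⟨⟨v, hv, hc⟩, hj⟩ := hp
    exact mem_biUnion.2 ⟨.inl v, hv, by simp [choiceSlots, hc, hj]⟩
  have hs := card_toLeft_add_card_toRight (u := s)
  rcases s.toRight.eq_empty_or_nonempty with hD | ⟨d, hd⟩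
  · calc #s = #s.toLeft := by rw [← hs, hD, card_empty, add_zero]
      _ ≤ ∑ c ∈ C, up c := hup _
      _ = #(C.sigma fun c => range (up c)) := by simp [card_sigma]
      _ ≤ _ := card_le_card hsub
  · -- the dummy `d` reaches every slot except the low ones of colours outside `L(A)`
    have hsub' : (univ.biUnion L).sigma (fun c => Ico (if c ∈ C then 0 else lo c) (up c)) ⊆
        s.biUnion (choiceSlots L lo up _) := by
      intro p hp
      simp only [mem_sigma, mem_Ico] at hp
      split_ifs at hp with hc
      · exact hsub (mem_sigma.2 ⟨hc, mem_range.2 hp.2.2⟩)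
      · exact mem_biUnion.2 ⟨.inr d, mem_toRight.1 hd, by simp [choiceSlots, hp]⟩
    have hcard : #((univ.biUnion L).sigma fun c => Ico (if c ∈ C then 0 else lo c) (up c)) +
        ∑ c ∈ univ.biUnion L \ C, lo c = ∑ c ∈ univ.biUnion L, up c := by
      rw [card_sigma, sdiff_eq_filter, sum_filter, ← sum_add_distrib]
      refine sum_congr rfl fun c _ => ?_
      split_ifs <;> simp [hle c]
    have hD : #s.toRight ≤ ∑ c ∈ univ.biUnion L, up c - Fintype.card V :=
      (card_le_univ _).trans (Fintype.card_fin _).le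
    have hV := hup univ
    rw [card_univ] at hV
    have : #s.toLeft + ∑ c ∈ univ.biUnion L \ C, lo c ≤ Fintype.card V := hlo s.toLeft
    have := card_le_card hsub'
    omega

variable {M : ℕ} {F : V ⊕ Fin M → Σ _ : ℕ, ℕ}

lemma mem_choiceSlots_inl {v : V} {p : Σ _ : ℕ, ℕ} :
    p ∈ choiceSlots L lo up M (.inl v) ↔ p.1 ∈ L v ∧ p.2 < up p.1 := by
  simp [choiceSlots]

lemma mem_choiceSlots_inr {d : Fin M} {p : Σ _ : ℕ, ℕ} :
    p ∈ choiceSlots L lo up M (.inr d) ↔ (∃ v, p.1 ∈ L v) ∧ lo p.1 ≤ p.2 ∧ p.2 < up p.1 := by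
  simp [choiceSlots]

lemma colorClass_fst_le (hFinj : F.Injective) (hF : ∀ x, F x ∈ choiceSlots L lo up M x)
    (c : ℕ) : colorClass (fun v => (F (.inl v)).1) c ≤ up c := by
  calc colorClass _ c ≤ #(range (up c)) := by
        refine card_le_card_of_injOn (fun v => (F (.inl v)).2) (fun v hv => ?_) ?_
        · simp only [coe_filter, Set.mem_ofPred_eq, mem_univ, true_and] at hv
          simpa [← hv] using (mem_choiceSlots_inl.1 (hF (.inl v))).2
        · intro v hv w hw hvw
          simp only [coe_filter, Set.mem_ofPred_eq, mem_univ, true_and] at hv hw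
          exact Sum.inl_injective (hFinj (Sigma.ext (hv.trans hw.symm) (heq_of_eq hvw)))
    _ = up c := card_range _

lemma image_eq_sigma_range (hFinj : F.Injective) (hF : ∀ x, F x ∈ choiceSlots L lo up M x)
    (hM : Fintype.card V + M = ∑ c ∈ univ.biUnion L, up c) :
    univ.image F = (univ.biUnion L).sigma fun c => range (up c) := by
  refine eq_of_subset_of_card_le (fun p hp => ?_) ?_
  · obtain ⟨x, -, rfl⟩ := mem_image.1 hp
    simp only [mem_sigma, mem_biUnion, mem_univ, true_and, mem_range]
    rcases x with v | d
    · exact ⟨⟨v, (mem_choiceSlots_inl.1 (hF _)).1⟩, (mem_choiceSlots_inl.1 (hF _)).2⟩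
    · exact ⟨(mem_choiceSlots_inr.1 (hF _)).1, (mem_choiceSlots_inr.1 (hF _)).2.2⟩
  · simp [card_image_of_injective _ hFinj, card_sigma, hM]

lemma le_colorClass_fst (hle : ∀ c, lo c ≤ up c) (hFinj : F.Injective)
    (hF : ∀ x, F x ∈ choiceSlots L lo up M x)
    (hM : Fintype.card V + M = ∑ c ∈ univ.biUnion L, up c) {c : ℕ} (hc : c ∈ univ.biUnion L) :
    lo c ≤ colorClass (fun v => (F (.inl v)).1) c := by
  calc lo c = #(range (lo c)) := (card_range _).symm
    _ ≤ colorClass _ c := by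
      refine card_le_card_of_surjOn (fun v => (F (.inl v)).2) fun j hj => ?_
      rw [coe_range, Set.mem_Iio] at hj
      have hslot : (⟨c, j⟩ : Σ _ : ℕ, ℕ) ∈ univ.image F := by
        rw [image_eq_sigma_range hFinj hF hM]
        exact mem_sigma.2 ⟨hc, mem_range.2 (hj.trans_le (hle c))⟩
      obtain ⟨x, -, hx⟩ := mem_image.1 hslot
      rcases x with v | d
      · exact ⟨v, by simp [hx], by simp [hx]⟩
      · have := (mem_choiceSlots_inr.1 (hF (.inr d))).2.1
        simp only [hx] at this
        omega

theorem exists_choice_of_hall (hle : ∀ c, lo c ≤ up c)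
    (hup : ∀ A : Finset V, #A ≤ ∑ c ∈ A.biUnion L, up c)
    (hlo : ∀ A : Finset V, #A + ∑ c ∈ univ.biUnion L \ A.biUnion L, lo c ≤ Fintype.card V) :
    ∃ g : V → ℕ, (∀ v, g v ∈ L v) ∧ (∀ c, colorClass g c ≤ up c) ∧
      ∀ c ∈ univ.biUnion L, lo c ≤ colorClass g c := by
  obtain ⟨F, hFinj, hF⟩ := (all_card_le_biUnion_card_iff_exists_injective _).1
    (card_le_card_biUnion_choiceSlots hle hup hlo)
  have hM : Fintype.card V + (∑ c ∈ univ.biUnion L, up c - Fintype.card V) =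
      ∑ c ∈ univ.biUnion L, up c := by
    have := hup univ
    rw [card_univ] at this
    omega
  exact ⟨_, fun v => (mem_choiceSlots_inl.1 (hF (.inl v))).1, colorClass_fst_le hFinj hF,
    fun c => le_colorClass_fst hle hFinj hF hM⟩

end Hall

section UniformLists

variable {L : V → Finset ℕ} {m : ℕ} {lo up : ℕ → ℕ}

lemma card_le_sum_of_eta_le_mul (hm : 0 < m) (hL : ∀ v, #(L v) = m)
    (hup : ∀ c, eta L c ≤ m * up c) (A : Finset V) : #A ≤ ∑ c ∈ A.biUnion L, up c := by
  refine Nat.le_of_mul_le_mul_left ?_ hm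
  calc m * #A = ∑ v ∈ A, #(A.biUnion L ∩ L v) := by
        rw [sum_congr rfl fun v hv => by rw [inter_eq_right.2 (subset_biUnion_of_mem L hv), hL v],
          sum_const, smul_eq_mul, mul_comm]
    _ ≤ ∑ v, #(A.biUnion L ∩ L v) := sum_le_sum_of_subset (subset_univ A)
    _ = ∑ c ∈ A.biUnion L, eta L c := (sum_eta_eq_sum_card_inter L _).symm
    _ ≤ ∑ c ∈ A.biUnion L, m * up c := sum_le_sum fun c _ => hup c
    _ = m * ∑ c ∈ A.biUnion L, up c := (mul_sum _ _ _).symm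

lemma card_add_sum_le_of_mul_le_eta (hm : 0 < m) (hL : ∀ v, #(L v) = m)
    (hlo : ∀ c, m * lo c ≤ eta L c) (A : Finset V) :
    #A + ∑ c ∈ univ.biUnion L \ A.biUnion L, lo c ≤ Fintype.card V := by
  classical
  set S := univ.biUnion L \ A.biUnion L
  have hA (v : V) (hv : v ∈ A) : #(S ∩ L v) = 0 := by
    rw [card_eq_zero, eq_empty_iff_forall_notMem]
    intro c hc
    exact (mem_sdiff.1 (mem_inter.1 hc).1).2 (mem_biUnion.2 ⟨v, hv, (mem_inter.1 hc).2⟩)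
  have hS : m * ∑ c ∈ S, lo c ≤ m * (Fintype.card V - #A) :=
    calc m * ∑ c ∈ S, lo c ≤ ∑ c ∈ S, eta L c := by
          rw [mul_sum]
          exact sum_le_sum fun c _ => hlo c
      _ = ∑ v ∈ Aᶜ, #(S ∩ L v) := by
        rw [sum_eta_eq_sum_card_inter, sum_subset (subset_univ Aᶜ)]
        exact fun v _ hv => hA v (by simpa using hv)
      _ ≤ ∑ v ∈ Aᶜ, m := sum_le_sum fun v _ => (card_le_card inter_subset_right).trans (hL v).le
      _ = m * (Fintype.card V - #A) := by rw [sum_const, card_compl, smul_eq_mul, mul_comm]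
  have := Nat.le_of_mul_le_mul_left hS hm
  have := card_le_univ A
  omega

theorem exists_choice_of_mul_le_eta_le_mul (hm : 0 < m) (hL : ∀ v, #(L v) = m)
    (hlo : ∀ c, m * lo c ≤ eta L c) (hup : ∀ c, eta L c ≤ m * up c) :
    ∃ g : V → ℕ, (∀ v, g v ∈ L v) ∧ ∀ c, lo c ≤ colorClass g c ∧ colorClass g c ≤ up c := by
  obtain ⟨g, hgL, hgup, hglo⟩ := exists_choice_of_hall
    (fun c => Nat.le_of_mul_le_mul_left ((hlo c).trans (hup c)) hm)
    (card_le_sum_of_eta_le_mul hm hL hup) (card_add_sum_le_of_mul_le_eta hm hL hlo)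
  refine ⟨g, hgL, fun c => ⟨?_, hgup c⟩⟩
  by_cases hc : c ∈ univ.biUnion L
  · exact hglo c hc
  · have hη : eta L c = 0 := by simpa [eta] using hc
    have := hlo c
    rw [hη, Nat.le_zero, mul_eq_zero] at this
    simp [this.resolve_left hm.ne']

end UniformLists

end Colorings

theorem stmt_1 [Fintype V] (G : SimpleGraph V) (k : ℕ)
    (h : ProportionallyChoosable G k) :
    ProportionallyChoosable G (k + 1) := by
  intro L hL
  obtain ⟨g, hgL, hg⟩ := exists_choice_of_mul_le_eta_le_mul k.add_one_pos hL
    (lo := fun c => eta L c - (eta L c + k) / (k + 1) * k)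
    (up := fun c => eta L c - eta L c / (k + 1) * k)
    (fun c => mul_sub_mul_le <| by
      have := Nat.lt_div_mul_add (a := eta L c + k) k.add_one_pos
      omega)
    (fun c => le_mul_sub_mul (Nat.div_mul_le_self _ _))
  have hL' (v : V) : #((L v).erase (g v)) = k := by simp [card_erase_of_mem (hgL v), hL]
  obtain ⟨f, hf⟩ := h _ hL'
  refine ⟨f, ⟨fun v => erase_subset _ _ (hf.1.1 v), hf.1.2⟩, fun c ⟨v, _⟩ => ?_⟩
  have hk : 0 < k := hL' v ▸ card_pos.2 ⟨_, hf.1.1 v⟩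
  have hsplit := eta_eq_colorClass_add_eta_erase hgL c
  refine IsRoundedDiv.succ_of_sub hk (hg c).1 (hg c).2 ?_
  rw [hsplit, Nat.add_sub_cancel_left]
  exact hf.isRoundedDiv c
end

section
/- If H is a subgraph of G and G is proportionally k-choosable, then H is proportionally k-choosable. -/
open Finset

variable {V : Type*}

/-- If `H` is (isomorphic to) a subgraph of `G`, via an injective map preserving
adjacency, and `G` is proportionally `k`-choosable, then so is `H`. -/
theorem stmt_2 {W : Type*} [Fintype V] [Fintype W]
    (G : SimpleGraph V) (H : SimpleGraph W) (k : ℕ)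
    (φ : W → V) (hinj : Function.Injective φ)
    (hadj : ∀ a b, H.Adj a b → G.Adj (φ a) (φ b))
    (h : ProportionallyChoosable G k) :
    ProportionallyChoosable H k := by
  classical
  intro L hL
  set N : ℕ := 1 + Finset.univ.sup (fun w : W => (L w).sup id) with hN
  have hlt : ∀ (w : W) (c : ℕ), c ∈ L w → c < N := by
    intro w c hc
    have h1 : c ≤ (L w).sup id := Finset.le_sup (f := id) hc
    have h2 : (L w).sup id ≤ Finset.univ.sup (fun w : W => (L w).sup id) :=
      Finset.le_sup (f := fun w : W => (L w).sup id) (Finset.mem_univ w)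
    omega
  set L' : V → Finset ℕ := fun v =>
    if hv : ∃ w, φ w = v then L hv.choose else (Finset.range k).image (· + N) with hL'
  have hLφ : ∀ w, L' (φ w) = L w := by
    intro w
    have hv : ∃ w', φ w' = φ w := ⟨w, rfl⟩
    simp only [hL', dif_pos hv]
    rw [hinj hv.choose_spec]
  have hL'card : ∀ v, (L' v).card = k := by
    intro v
    by_cases hv : ∃ w, φ w = v
    · obtain ⟨w, rfl⟩ := hv; rw [hLφ]; exact hL w
    · simp only [hL', dif_neg hv]
      rw [Finset.card_image_of_injective _ (add_left_injective N), Finset.card_range]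
  have hbig : ∀ v, ¬ (∃ w, φ w = v) → ∀ c ∈ L' v, N ≤ c := by
    intro v hv c hc
    simp only [hL', dif_neg hv, Finset.mem_image, Finset.mem_range] at hc
    obtain ⟨i, hi, rfl⟩ := hc; omega
  obtain ⟨f, ⟨hfmem, hfadj⟩, hfprop⟩ := h L' hL'card
  refine ⟨f ∘ φ, ⟨⟨fun w => by simpa [hLφ w] using hfmem (φ w),
      fun a b hab => hfadj _ _ (hadj a b hab)⟩, ?_⟩⟩
  intro c hc
  obtain ⟨w0, hw0⟩ := hc
  have hcN : c < N := hlt w0 c hw0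
  have heta : eta L c = eta L' c := by
    unfold eta
    apply Finset.card_bij (fun w _ => φ w)
    · intro w hw
      simp only [Finset.mem_filter, Finset.mem_univ, true_and] at hw ⊢
      rw [hLφ]; exact hw
    · intro a _ b _ hab; exact hinj hab
    · intro v hv
      simp only [Finset.mem_filter, Finset.mem_univ, true_and] at hv
      by_cases hvr : ∃ w, φ w = v
      · obtain ⟨w, rfl⟩ := hvr
        exact ⟨w, by simp only [Finset.mem_filter, Finset.mem_univ, true_and, ← hLφ w]; exact hv, rfl⟩
      · exact absurd (hbig v hvr c hv) (by omega)
  have hcc : colorClass (f ∘ φ) c = colorClass f c := by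
    unfold colorClass
    apply Finset.card_bij (fun w _ => φ w)
    · intro w hw
      simp only [Finset.mem_filter, Finset.mem_univ, true_and, Function.comp] at hw ⊢
      exact hw
    · intro a _ b _ hab; exact hinj hab
    · intro v hv
      simp only [Finset.mem_filter, Finset.mem_univ, true_and] at hv
      by_cases hvr : ∃ w, φ w = v
      · obtain ⟨w, rfl⟩ := hvr
        exact ⟨w, by simp only [Finset.mem_filter, Finset.mem_univ, true_and,
          Function.comp_apply]; exact hv, rfl⟩
      · have := hbig v hvr (f v) (hfmem v)
        omega
  rw [heta, hcc]
  exact hfprop c ⟨φ w0, by rw [hLφ]; exact hw0⟩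
end

section
/- For any graph G that is not a complete graph, the proportional choice number of G is at most |V(G)| - 1; that is, G is proportionally (|V(G)|-1)-choosable. -/
open Finset

variable {V : Type*}

lemma sum_eta_aux [Fintype V] (L : V → Finset ℕ) :
    ∑ c ∈ Finset.univ.biUnion L, eta L c = ∑ w : V, (L w).card := by
  classical
  have h1 : ∀ c, eta L c = ∑ w : V, if c ∈ L w then 1 else 0 := by
    intro c; rw [eta, Finset.card_filter]
  simp_rw [h1]
  rw [Finset.sum_comm]
  refine Finset.sum_congr rfl fun w _ => ?_
  rw [← Finset.card_filter]
  congr 1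
  ext c
  simp only [Finset.mem_filter, Finset.mem_biUnion, Finset.mem_univ, true_and]
  exact ⟨fun h => h.2, fun h => ⟨⟨w, h⟩, h⟩⟩

theorem stmt_3 [Fintype V] (G : SimpleGraph V)
    (h : ∃ u v : V, u ≠ v ∧ ¬ G.Adj u v) :
    ProportionallyChoosable G (Fintype.card V - 1) := by
  classical
  obtain ⟨u, v, huv, hadj⟩ := h
  intro L hL
  set n := Fintype.card V with hn
  have hn2 : 2 ≤ n := Fintype.one_lt_card_iff.mpr ⟨u, v, huv⟩
  set C : Finset ℕ := Finset.univ.biUnion L with hCdef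
  have hmemC : ∀ {c : ℕ} {w : V}, c ∈ L w → c ∈ C := by
    intro c w hc
    exact Finset.mem_biUnion.mpr ⟨w, Finset.mem_univ _, hc⟩
  have hetapos : ∀ c ∈ C, 1 ≤ eta L c := by
    intro c hc
    obtain ⟨w, _, hw⟩ := Finset.mem_biUnion.mp hc
    rw [eta]
    exact Finset.card_pos.mpr ⟨w, Finset.mem_filter.mpr ⟨Finset.mem_univ _, hw⟩⟩
  have hetale : ∀ c, eta L c ≤ n := by
    intro c
    rw [eta, hn]
    exact (Finset.card_filter_le _ _).trans_eq Finset.card_univ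
  have hsum : ∑ c ∈ C, eta L c = n * (n - 1) := by
    rw [hCdef, sum_eta_aux]
    simp only [hL]
    rw [Finset.sum_const, Finset.card_univ, smul_eq_mul]
  by_cases hEq : ∀ w, L w = L u
  · -- Case A : all lists equal
    have hcard : (L u).card = n - 1 := hL u
    obtain ⟨c₀, hc₀⟩ : (L u).Nonempty := Finset.card_pos.mp (by omega)
    have hsmem : v ∈ (Finset.univ.erase u) := Finset.mem_erase.mpr ⟨huv.symm, Finset.mem_univ _⟩
    set s : Finset V := (Finset.univ.erase u).erase v with hs
    set t : Finset ℕ := (L u).erase c₀ with ht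
    have hscard : s.card = t.card := by
      rw [hs, ht, Finset.card_erase_of_mem hsmem, Finset.card_erase_of_mem (Finset.mem_univ u),
        Finset.card_erase_of_mem hc₀, Finset.card_univ, hcard, ← hn]
    set e := Finset.equivOfCardEq hscard with he
    have hmem_s : ∀ {w : V}, ¬(w = u ∨ w = v) → w ∈ s := by
      intro w hw
      push_neg at hw
      exact Finset.mem_erase.mpr ⟨hw.2, Finset.mem_erase.mpr ⟨hw.1, Finset.mem_univ _⟩⟩
    set f : V → ℕ := fun w =>
      if hw : w = u ∨ w = v then c₀ else (e ⟨w, hmem_s hw⟩ : ℕ) with hf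
    have hfuv : ∀ {w : V}, (w = u ∨ w = v) → f w = c₀ := by
      intro w hw; rw [hf]; exact dif_pos hw
    have hfne : ∀ {w : V} (hw : ¬(w = u ∨ w = v)), f w = (e ⟨w, hmem_s hw⟩ : ℕ) := by
      intro w hw; rw [hf]; exact dif_neg hw
    have hfc₀ : ∀ w, f w = c₀ ↔ (w = u ∨ w = v) := by
      intro w
      constructor
      · intro hw
        by_contra hc
        rw [hfne hc] at hw
        have h2 : (e ⟨w, hmem_s hc⟩ : ℕ) ∈ (L u).erase c₀ := (e ⟨w, hmem_s hc⟩).2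
        exact (Finset.mem_erase.mp h2).1 hw
      · exact hfuv
    have hfmem : ∀ w, f w ∈ L u := by
      intro w
      by_cases hw : w = u ∨ w = v
      · rw [hfuv hw]; exact hc₀
      · rw [hfne hw]
        have h2 : (e ⟨w, hmem_s hw⟩ : ℕ) ∈ (L u).erase c₀ := (e ⟨w, hmem_s hw⟩).2
        exact Finset.mem_of_mem_erase h2
    have hinj : ∀ {a b : V} (ha : ¬(a = u ∨ a = v)) (hb : ¬(b = u ∨ b = v)),
        f a = f b → a = b := by
      intro a b ha hb hab
      rw [hfne ha, hfne hb] at hab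
      have := e.injective (Subtype.ext hab)
      exact congrArg Subtype.val this
    have heta_all : ∀ c ∈ L u, eta L c = n := by
      intro c hc
      rw [eta]
      rw [Finset.filter_true_of_mem (fun w _ => by rw [hEq w]; exact hc)]
      rw [Finset.card_univ]
    refine ⟨f, ⟨⟨fun w => by rw [hEq w]; exact hfmem w, ?_⟩, ?_⟩⟩
    · -- proper
      intro a b hab hfeq
      have hne : a ≠ b := hab.ne
      by_cases ha : a = u ∨ a = v
      · by_cases hb : b = u ∨ b = v
        · rcases ha with ha | ha <;> rcases hb with hb | hb <;> subst ha <;> subst hb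
          · exact hne rfl
          · exact hadj hab
          · exact hadj hab.symm
          · exact hne rfl
        · exact hb (((hfc₀ b).mp (hfeq ▸ hfuv ha)).imp id id)
      · by_cases hb : b = u ∨ b = v
        · exact ha ((hfc₀ a).mp (hfeq.trans (hfuv hb)))
        · exact hne (hinj ha hb hfeq)
    · -- proportional
      intro c ⟨w, hcw⟩
      rw [hEq w] at hcw
      have heta : eta L c = n := heta_all c hcw
      by_cases hcc : c = c₀
      · right
        subst hcc
        have hclass : (Finset.univ.filter fun w => f w = c) = {u, v} := by
          ext w
          simp only [Finset.mem_filter, Finset.mem_univ, true_and, Finset.mem_insert,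
            Finset.mem_singleton]
          exact hfc₀ w
        rw [colorClass, hclass, Finset.card_pair huv, heta]
        have harith : n + (n - 1) - 1 = 2 * (n - 1) := by omega
        rw [harith, Nat.mul_div_cancel _ (by omega : 0 < n - 1)]
      · left
        have hct : c ∈ t := Finset.mem_erase.mpr ⟨hcc, hcw⟩
        have hn3 : 3 ≤ n := by
          have : 1 < (L u).card := Finset.one_lt_card.mpr ⟨c, hcw, c₀, hc₀, hcc⟩
          omega
        set w₀ : V := ↑(e.symm ⟨c, hct⟩) with hw₀
        have hw₀s : (w₀ : V) ∈ (Finset.univ.erase u).erase v := (e.symm ⟨c, hct⟩).2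
        have hw₀ne : ¬(w₀ = u ∨ w₀ = v) := by
          have h1 := Finset.mem_erase.mp hw₀s
          have h2 := Finset.mem_erase.mp h1.2
          push_neg
          exact ⟨h2.1, h1.1⟩
        have hclass : (Finset.univ.filter fun w => f w = c) = {w₀} := by
          ext x
          simp only [Finset.mem_filter, Finset.mem_univ, true_and, Finset.mem_singleton]
          constructor
          · intro hx
            by_cases hxuv : x = u ∨ x = v
            · exact absurd ((hfuv hxuv).symm.trans hx) (fun hh => hcc hh.symm)
            · rw [hfne hxuv] at hx
              have : e ⟨x, hmem_s hxuv⟩ = ⟨c, hct⟩ := Subtype.ext hx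
              have : (⟨x, hmem_s hxuv⟩ : {y // y ∈ s}) = e.symm ⟨c, hct⟩ := by
                rw [← this, Equiv.symm_apply_apply]
              rw [hw₀, ← this]
          · intro hx
            subst hx
            rw [hfne hw₀ne]
            have : (⟨w₀, hmem_s hw₀ne⟩ : {y // y ∈ s}) = e.symm ⟨c, hct⟩ := Subtype.ext rfl
            rw [this, Equiv.apply_symm_apply]
        rw [colorClass, hclass, Finset.card_singleton, heta]
        symm
        exact Nat.div_eq_of_lt_le (by omega) (by omega)
  · -- Case B : lists not all equal
    push_neg at hEq
    obtain ⟨w₁, hw₁⟩ := hEq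
    -- |C| ≥ n
    have hCcard : n ≤ C.card := by
      by_contra hlt
      push_neg at hlt
      have h1 : ∑ c ∈ C, eta L c ≤ C.card * n := by
        have := Finset.sum_le_card_nsmul C (eta L) n (fun c _ => hetale c)
        simpa using this
      have hCn1 : C.card = n - 1 := by
        have h2 : n * (n - 1) ≤ C.card * n := hsum ▸ h1
        have h3 : (n - 1) * n ≤ C.card * n := by rw [Nat.mul_comm (n-1) n]; exact h2
        have h4 := Nat.le_of_mul_le_mul_right h3 (show 0 < n by omega)
        omega
      have hall_n : ∀ c ∈ C, eta L c = n := by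
        by_contra hcon
        push_neg at hcon
        obtain ⟨c₁, hc₁, hc₁n⟩ := hcon
        have hstrict : ∑ c ∈ C, eta L c < ∑ _c ∈ C, n :=
          Finset.sum_lt_sum (fun c _ => hetale c) ⟨c₁, hc₁, lt_of_le_of_ne (hetale c₁) hc₁n⟩
        rw [hsum, Finset.sum_const, smul_eq_mul, hCn1] at hstrict
        nlinarith
      have hsub : ∀ w, L w = C := by
        intro w
        have hsub1 : C ⊆ L w := by
          intro c hc
          have : eta L c = n := hall_n c hc
          rw [eta] at this
          have huniv : (Finset.univ.filter fun x => c ∈ L x) = Finset.univ :=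
            Finset.eq_univ_of_card _ (by rw [this, hn])
          have := Finset.mem_filter.mp (huniv ▸ Finset.mem_univ w)
          exact this.2
        exact (Finset.eq_of_subset_of_card_le hsub1 (by rw [hL w, hCn1])).symm
      exact hw₁ ((hsub w₁).trans (hsub u).symm)
    set m : ℕ := C.card - n with hm
    have hCm : C.card = n + m := by omega
    -- Hall system
    set t : {c // c ∈ C} → Finset (V ⊕ Fin m) := fun c =>
      ((Finset.univ.filter fun w => (c : ℕ) ∈ L w).image Sum.inl) ∪
        (if eta L (c : ℕ) ≤ n - 2 then (Finset.univ : Finset (Fin m)).image Sum.inr else ∅)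
      with htdef
    have hall : ∀ s : Finset {c // c ∈ C}, s.card ≤ (s.biUnion t).card := by
      intro s
      rcases s.eq_empty_or_nonempty with rfl | hsne
      · simp
      set U : Finset ℕ := s.image Subtype.val with hU
      have hUcard : U.card = s.card := Finset.card_image_of_injective s Subtype.val_injective
      have hUC : U ⊆ C := by
        intro c hc
        obtain ⟨c', _, rfl⟩ := Finset.mem_image.mp hc
        exact c'.2
      by_cases hex : ∃ c ∈ s, eta L (c : ℕ) ≤ n - 2
      · obtain ⟨c₀, hc₀s, hc₀η⟩ := hex
        -- all the dummies are in the biUnion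
        have hinr : ((Finset.univ : Finset (Fin m)).image Sum.inr) ⊆ s.biUnion t := by
          intro x hx
          refine Finset.mem_biUnion.mpr ⟨c₀, hc₀s, ?_⟩
          rw [htdef]
          exact Finset.mem_union_right _ (by rw [if_pos hc₀η]; exact hx)
        set X : Finset V := Finset.univ.filter fun w => ∃ c ∈ s, (c : ℕ) ∈ L w with hX
        have hinl : X.image Sum.inl ⊆ s.biUnion t := by
          intro x hx
          obtain ⟨w, hw, rfl⟩ := Finset.mem_image.mp hx
          obtain ⟨c, hcs, hcw⟩ := (Finset.mem_filter.mp hw).2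
          refine Finset.mem_biUnion.mpr ⟨c, hcs, ?_⟩
          rw [htdef]
          exact Finset.mem_union_left _
            (Finset.mem_image.mpr ⟨w, Finset.mem_filter.mpr ⟨Finset.mem_univ _, hcw⟩, rfl⟩)
        have hdisj : Disjoint (X.image Sum.inl) ((Finset.univ : Finset (Fin m)).image Sum.inr) := by
          simp only [Finset.disjoint_left, Finset.mem_image]
          rintro x ⟨w, _, rfl⟩ ⟨d, _, hd⟩
          exact Sum.inl_ne_inr hd.symm
        have hcard_union : X.card + m ≤ (s.biUnion t).card := by
          have h1 : (X.image Sum.inl ∪ (Finset.univ : Finset (Fin m)).image Sum.inr) ⊆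
              s.biUnion t := Finset.union_subset hinl hinr
          have h2 := Finset.card_le_card h1
          rw [Finset.card_union_of_disjoint hdisj,
            Finset.card_image_of_injective _ Sum.inl_injective,
            Finset.card_image_of_injective _ Sum.inr_injective, Finset.card_univ,
            Fintype.card_fin] at h2
          exact h2
        by_cases hsm : s.card ≤ m + 1
        · -- X is nonempty
          have hXpos : 1 ≤ X.card := by
            have h1 : 1 ≤ eta L (c₀ : ℕ) := hetapos _ c₀.2
            rw [eta] at h1
            obtain ⟨w, hw⟩ := Finset.card_pos.mp h1
            have hw2 := Finset.mem_filter.mp hw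
            exact Finset.card_pos.mpr ⟨w, Finset.mem_filter.mpr
              ⟨Finset.mem_univ _, c₀, hc₀s, hw2.2⟩⟩
          omega
        · push_neg at hsm
          have hXuniv : X = Finset.univ := by
            rw [Finset.eq_univ_iff_forall]
            intro w
            rw [hX, Finset.mem_filter]
            refine ⟨Finset.mem_univ _, ?_⟩
            by_contra hcon
            push_neg at hcon
            have hLsub : L w ⊆ C \ U := by
              intro c hc
              refine Finset.mem_sdiff.mpr ⟨hmemC hc, ?_⟩
              intro hcU
              obtain ⟨c', hc's, hc'⟩ := Finset.mem_image.mp hcU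
              exact hcon c' hc's (hc' ▸ hc)
            have h1 : (L w).card ≤ (C \ U).card := Finset.card_le_card hLsub
            rw [hL w, Finset.card_sdiff_of_subset hUC, hUcard] at h1
            omega
          have hXn : X.card = n := by rw [hXuniv, Finset.card_univ, hn]
          have hsC : s.card ≤ C.card := hUcard ▸ Finset.card_le_card hUC
          omega
      · push_neg at hex
        have hbig : ∀ c ∈ s, n - 1 ≤ eta L (c : ℕ) := by
          intro c hc
          have := hex c hc
          omega
        have hsle : ∑ c ∈ U, eta L c ≤ n * (n - 1) := by
          rw [← hsum]
          exact Finset.sum_le_sum_of_subset hUC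
        have hslo : U.card * (n - 1) ≤ ∑ c ∈ U, eta L c := by
          have := Finset.card_nsmul_le_sum U (eta L) (n - 1) ?_
          · simpa using this
          · intro c hc
            obtain ⟨c', hc's, rfl⟩ := Finset.mem_image.mp hc
            exact hbig c' hc's
        have hsn : s.card ≤ n := by
          rw [← hUcard]
          exact Nat.le_of_mul_le_mul_right (hslo.trans hsle) (show 0 < n - 1 by omega)
        rcases lt_or_eq_of_le hsn with hlt | heq
        · -- s.card ≤ n - 1, use a single color's neighborhood
          obtain ⟨c₁, hc₁⟩ := hsne
          have hsub : (Finset.univ.filter fun w => (c₁ : ℕ) ∈ L w).image Sum.inl ⊆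
              s.biUnion t := by
            intro x hx
            refine Finset.mem_biUnion.mpr ⟨c₁, hc₁, ?_⟩
            rw [htdef]
            exact Finset.mem_union_left _ hx
          have h1 := Finset.card_le_card hsub
          rw [Finset.card_image_of_injective _ Sum.inl_injective] at h1
          have h2 : n - 1 ≤ (Finset.univ.filter fun w => (c₁ : ℕ) ∈ L w).card := by
            have := hbig c₁ hc₁
            rwa [eta] at this
          omega
        · -- s.card = n : U = C and every vertex covered
          have hUeq : U = C := by
            apply Finset.eq_of_subset_of_card_le hUC
            by_contra hcon
            push_neg at hcon
            -- then some color outside U, sum too big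
            have hUC' : U ⊂ C := Finset.ssubset_iff_subset_ne.mpr
              ⟨hUC, fun hh => by rw [hh] at hcon; omega⟩
            obtain ⟨c₂, hc₂C, hc₂U⟩ := Finset.exists_of_ssubset hUC'
            have h1 : ∑ c ∈ U, eta L c + eta L c₂ ≤ ∑ c ∈ C, eta L c := by
              have : insert c₂ U ⊆ C := Finset.insert_subset hc₂C hUC
              calc ∑ c ∈ U, eta L c + eta L c₂ = ∑ c ∈ insert c₂ U, eta L c := by
                    rw [Finset.sum_insert hc₂U]; ring
                _ ≤ ∑ c ∈ C, eta L c := Finset.sum_le_sum_of_subset this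
            have h2 : 1 ≤ eta L c₂ := hetapos _ hc₂C
            rw [hsum] at h1
            rw [hUcard, heq] at hslo
            nlinarith
          have hcover : Finset.univ.image Sum.inl ⊆ s.biUnion t := by
            intro x hx
            obtain ⟨w, _, rfl⟩ := Finset.mem_image.mp hx
            obtain ⟨c, hc⟩ : (L w).Nonempty := Finset.card_pos.mp (by rw [hL w]; omega)
            have hcU : c ∈ U := hUeq ▸ hmemC hc
            obtain ⟨c', hc's, rfl⟩ := Finset.mem_image.mp hcU
            refine Finset.mem_biUnion.mpr ⟨c', hc's, ?_⟩
            rw [htdef]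
            exact Finset.mem_union_left _
              (Finset.mem_image.mpr ⟨w, Finset.mem_filter.mpr ⟨Finset.mem_univ _, hc⟩, rfl⟩)
          have h1 := Finset.card_le_card hcover
          rw [Finset.card_image_of_injective _ Sum.inl_injective, Finset.card_univ, ← hn] at h1
          omega
    obtain ⟨φ, hφinj, hφmem⟩ := (Finset.all_card_le_biUnion_card_iff_exists_injective t).mp hall
    have hcards : Fintype.card {c // c ∈ C} = Fintype.card (V ⊕ Fin m) := by
      rw [Fintype.card_coe, Fintype.card_sum, Fintype.card_fin, ← hn, hCm]
    have hbij : Function.Bijective φ :=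
      (Fintype.bijective_iff_injective_and_card φ).mpr ⟨hφinj, hcards⟩
    set e := Equiv.ofBijective φ hbij with he
    have heφ : ∀ c, e c = φ c := fun c => rfl
    set f : V → ℕ := fun w => ((e.symm (Sum.inl w)) : ℕ) with hf
    have hmem_t : ∀ (c : {c // c ∈ C}) (w : V), Sum.inl w ∈ t c → (c : ℕ) ∈ L w := by
      intro c w hw
      rw [htdef] at hw
      rcases Finset.mem_union.mp hw with hw | hw
      · obtain ⟨w', hw', hww⟩ := Finset.mem_image.mp hw
        cases hww
        exact (Finset.mem_filter.mp hw').2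
      · split_ifs at hw with hcond
        · obtain ⟨d, _, hd⟩ := Finset.mem_image.mp hw
          exact absurd hd Sum.inr_ne_inl
        · exact absurd hw (Finset.notMem_empty _)
    have hfL : ∀ w, f w ∈ L w := by
      intro w
      have h1 : φ (e.symm (Sum.inl w)) ∈ t (e.symm (Sum.inl w)) := hφmem _
      have h2 : φ (e.symm (Sum.inl w)) = Sum.inl w := by
        rw [← heφ, Equiv.apply_symm_apply]
      rw [h2] at h1
      exact hmem_t _ _ h1
    have hfinj : Function.Injective f := by
      intro a b hab
      rw [hf] at hab
      have h1 : e.symm (Sum.inl a) = e.symm (Sum.inl b) := Subtype.ext hab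
      have := e.symm.injective h1
      exact Sum.inl_injective this
    have hccle : ∀ c, colorClass f c ≤ 1 := by
      intro c
      rw [colorClass]
      refine Finset.card_le_one.mpr ?_
      intro a ha b hb
      have h1 := (Finset.mem_filter.mp ha).2
      have h2 := (Finset.mem_filter.mp hb).2
      exact hfinj (h1.trans h2.symm)
    have hused : ∀ (c : ℕ) (hc : c ∈ C), n - 1 ≤ eta L c → ∃ w, f w = c := by
      intro c hc hbig
      rcases hφc : φ ⟨c, hc⟩ with w | d
      · refine ⟨w, ?_⟩
        have : e.symm (Sum.inl w) = ⟨c, hc⟩ := by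
          rw [← hφc, ← heφ, Equiv.symm_apply_apply]
        rw [hf]
        simp only [this]
      · have h1 := hφmem ⟨c, hc⟩
        rw [hφc, htdef] at h1
        rcases Finset.mem_union.mp h1 with h2 | h2
        · obtain ⟨w', _, hw'⟩ := Finset.mem_image.mp h2
          exact absurd hw' Sum.inl_ne_inr
        · split_ifs at h2 with hcond
          · have hcond' : eta L c ≤ n - 2 := hcond
            omega
          · exact absurd h2 (Finset.notMem_empty _)
    refine ⟨f, ⟨⟨hfL, fun a b hab hfeq => hab.ne (hfinj hfeq)⟩, ?_⟩⟩
    intro c ⟨w, hcw⟩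
    have hcC : c ∈ C := hmemC hcw
    have hη1 : 1 ≤ eta L c := hetapos _ hcC
    have hηn : eta L c ≤ n := hetale c
    by_cases hbig : n - 1 ≤ eta L c
    · -- the color is used exactly once
      obtain ⟨w₀, hw₀⟩ := hused c hcC hbig
      have hcc1 : colorClass f c = 1 := by
        have h1 : 1 ≤ colorClass f c := by
          rw [colorClass]
          exact Finset.card_pos.mpr ⟨w₀, Finset.mem_filter.mpr ⟨Finset.mem_univ _, hw₀⟩⟩
        have h2 := hccle c
        omega
      left
      rw [hcc1]
      -- need n ≥ 3 when eta = n
      have hn3 : eta L c = n → 3 ≤ n := by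
        intro htop
        have h1 : eta L c + ∑ c' ∈ C.erase c, eta L c' = ∑ c' ∈ C, eta L c' :=
          Finset.add_sum_erase C (eta L) hcC
        have h2 : (C.erase c).card * 1 ≤ ∑ c' ∈ C.erase c, eta L c' := by
          have := Finset.card_nsmul_le_sum (C.erase c) (eta L) 1
            (fun c' hc' => hetapos _ (Finset.mem_of_mem_erase hc'))
          simpa using this
        rw [Finset.card_erase_of_mem hcC] at h2
        rw [hsum, htop] at h1
        by_contra hcon
        have hn2' : n = 2 := by omega
        rw [hn2'] at h1
        omega
      symm
      refine Nat.div_eq_of_lt_le (by omega) ?_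
      rcases Nat.lt_or_ge (eta L c) n with hlt | hge
      · omega
      · have := hn3 (by omega)
        omega
    · -- small multiplicity
      push_neg at hbig
      have hsmall : eta L c ≤ n - 2 := by omega
      rcases Nat.le_one_iff_eq_zero_or_eq_one.mp (hccle c) with h0 | h1
      · left
        rw [h0]
        symm
        exact Nat.div_eq_of_lt (by omega)
      · right
        rw [h1]
        symm
        exact Nat.div_eq_of_lt_le (by omega) (by omega)
end

section
/- Let L be a k-assignment for a graph G and f a proportional L-coloring of G. Then the number of colors c in the palette with k not dividing η_L(c) and |f⁻¹(c)| = ⌈η_L(c)/k⌉ equals (1/k) · Σ_{c ∈ palette} (η_L(c) mod k). -/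
open Finset

variable {V : Type*}

lemma ceil_div_of_dvd {k n : ℕ} (hk : 1 ≤ k) (h : k ∣ n) : (n + k - 1) / k = n / k := by
  obtain ⟨m, rfl⟩ := h
  have h1 : k * m + k - 1 = k * m + (k - 1) := by omega
  have h3 : (k - 1) / k = 0 := Nat.div_eq_of_lt (by omega)
  rw [h1, Nat.mul_add_div (by omega), h3, Nat.mul_div_cancel_left _ (by omega), Nat.add_zero]

lemma ceil_div_of_not_dvd {k n : ℕ} (hk : 1 ≤ k) (h : ¬ k ∣ n) : (n + k - 1) / k = n / k + 1 := by
  have hm := Nat.div_add_mod n k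
  have hlt : n % k < k := Nat.mod_lt _ (by omega)
  have hr : 1 ≤ n % k := by
    rcases Nat.eq_zero_or_pos (n % k) with h0 | h0
    · exact absurd (Nat.dvd_of_mod_eq_zero h0) h
    · exact h0
  have he : k * (n / k + 1) = k * (n / k) + k := by ring
  have h2 : n + k - 1 = k * (n / k + 1) + (n % k - 1) := by omega
  have h3 : (n % k - 1) / k = 0 := Nat.div_eq_of_lt (by omega)
  rw [h2, Nat.mul_add_div (by omega), h3, Nat.add_zero]


/-- The number of almost excessive colors of a proportional `L`-coloring is
`(1/k) ∑_{c ∈ palette} (η(c) mod k)`. -/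
theorem stmt_4 [Fintype V] [DecidableEq V] (G : SimpleGraph V) (k : ℕ) (hk : 1 ≤ k)
    (L : V → Finset ℕ) (hL : ∀ v, (L v).card = k)
    (f : V → ℕ) (hf : IsProportionalColoring G L k f) :
    k * ((Finset.univ.biUnion L).filter fun c =>
        ¬ k ∣ eta L c ∧ colorClass f c = (eta L c + k - 1) / k).card =
      ∑ c ∈ Finset.univ.biUnion L, eta L c % k := by
  classical
  obtain ⟨⟨hmem, -⟩, hprop⟩ := hf
  set P := Finset.univ.biUnion L with hP
  have hsub : ∀ v, L v ⊆ P := fun v c hc => Finset.mem_biUnion.2 ⟨v, Finset.mem_univ v, hc⟩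
  -- sum of eta over palette
  have hsum_eta : ∑ c ∈ P, eta L c = k * Fintype.card V := by
    have h1 : ∑ c ∈ P, eta L c = ∑ c ∈ P, ∑ v : V, (if c ∈ L v then 1 else 0) := by
      refine Finset.sum_congr rfl fun c _ => ?_
      rw [eta, Finset.card_filter]
    rw [h1, Finset.sum_comm]
    have h2 : ∀ v : V, ∑ c ∈ P, (if c ∈ L v then 1 else 0) = k := by
      intro v
      rw [← Finset.card_filter]
      have : P.filter (fun c => c ∈ L v) = L v := by
        ext c
        simp only [Finset.mem_filter]
        exact ⟨fun h => h.2, fun h => ⟨hsub v h, h⟩⟩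
      rw [this, hL]
    rw [Finset.sum_congr rfl fun v _ => h2 v]
    simp [mul_comm]
  -- sum of colorClass over palette
  have hsum_cc : ∑ c ∈ P, colorClass f c = Fintype.card V := by
    have h1 : ∑ c ∈ P, colorClass f c = ∑ c ∈ P, ∑ v : V, (if f v = c then 1 else 0) := by
      refine Finset.sum_congr rfl fun c _ => ?_
      rw [colorClass, Finset.card_filter]
    rw [h1, Finset.sum_comm]
    have h2 : ∀ v : V, ∑ c ∈ P, (if f v = c then 1 else 0) = 1 := by
      intro v
      rw [Finset.sum_ite_eq P (f v) (fun _ => 1), if_pos (hsub v (hmem v))]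
    rw [Finset.sum_congr rfl fun v _ => h2 v]
    simp
  -- per-color decomposition
  have hkey : ∀ c ∈ P, colorClass f c =
      eta L c / k + (if ¬ k ∣ eta L c ∧ colorClass f c = (eta L c + k - 1) / k then 1 else 0) := by
    intro c hc
    have hex : ∃ v, c ∈ L v := by
      obtain ⟨v, -, hv⟩ := Finset.mem_biUnion.1 hc
      exact ⟨v, hv⟩
    by_cases hd : k ∣ eta L c
    · have hceil : (eta L c + k - 1) / k = eta L c / k := ceil_div_of_dvd hk hd
      have : colorClass f c = eta L c / k := by
        rcases hprop c hex with h | h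
        · exact h
        · rw [h, hceil]
      simp [this, hd]
    · have hceil : (eta L c + k - 1) / k = eta L c / k + 1 := ceil_div_of_not_dvd hk hd
      rcases hprop c hex with h | h
      · have hcond : ¬ (¬ k ∣ eta L c ∧ colorClass f c = (eta L c + k - 1) / k) := by
          rw [hceil, h]
          rintro ⟨-, habs⟩
          omega
        rw [if_neg hcond, Nat.add_zero]
        exact h
      · have hcond : ¬ k ∣ eta L c ∧ colorClass f c = (eta L c + k - 1) / k := ⟨hd, h⟩
        rw [hceil] at h
        rw [if_pos hcond]
        exact h
  -- combine
  set A := (P.filter fun c =>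
    ¬ k ∣ eta L c ∧ colorClass f c = (eta L c + k - 1) / k).card with hA
  have hsplit : ∑ c ∈ P, colorClass f c = (∑ c ∈ P, eta L c / k) + A := by
    rw [Finset.sum_congr rfl hkey, Finset.sum_add_distrib]
    congr 1
    rw [hA, Finset.card_filter]
  have hdecomp : ∑ c ∈ P, eta L c =
      k * (∑ c ∈ P, eta L c / k) + ∑ c ∈ P, eta L c % k := by
    rw [Finset.mul_sum, ← Finset.sum_add_distrib]
    exact Finset.sum_congr rfl fun c _ => (Nat.div_add_mod (eta L c) k).symm
  have hfin : k * ((∑ c ∈ P, eta L c / k) + A) =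
      k * (∑ c ∈ P, eta L c / k) + ∑ c ∈ P, eta L c % k := by
    rw [← hsplit, hsum_cc, ← hdecomp, hsum_eta]
  rw [Nat.mul_add] at hfin
  exact Nat.add_left_cancel hfin
end

section
/- For every positive integer k, the star K_{1,2k-1} is not proportionally k-choosable. -/
open Finset

variable {V : Type*}

/-- The star `K_{1,2k-1}` is not proportionally `k`-choosable. -/
theorem stmt_5 (k : ℕ) (hk : 1 ≤ k) :
    ¬ ProportionallyChoosable
        (completeBipartiteGraph (Fin 1) (Fin (2 * k - 1))) k := by
  intro h
  obtain ⟨f, ⟨hmem, hadj⟩, hprop⟩ :=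
    h (fun _ => Finset.range k) (fun _ => Finset.card_range k)
  set c0 := f (Sum.inl 0) with hc0def
  have hc0 : c0 ∈ Finset.range k := hmem _
  have heta : eta (fun _ : (Fin 1 ⊕ Fin (2 * k - 1)) => Finset.range k) c0 = 2 * k := by
    unfold eta
    rw [Finset.filter_true_of_mem (fun _ _ => hc0)]
    simp [Fintype.card_sum]
    omega
  have hclass : colorClass f c0 = 1 := by
    unfold colorClass
    have : (Finset.univ.filter fun v => f v = c0) = {Sum.inl 0} := by
      ext v
      simp only [Finset.mem_filter, Finset.mem_univ, true_and, Finset.mem_singleton]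
      constructor
      · intro hv
        cases v with
        | inl i =>
          have : i = 0 := Subsingleton.elim i 0
          simp [this]
        | inr j =>
          exfalso
          exact hadj (Sum.inl 0) (Sum.inr j) (by simp) (by rw [hv])
      · intro hv; rw [hv]
    rw [this, Finset.card_singleton]
  have := hprop c0 ⟨Sum.inl 0, hc0⟩
  rw [heta, hclass] at this
  have h1 : 2 * k / k = 2 := by
    rw [Nat.mul_div_cancel _ (by omega : 0 < k)]
  have h2 : (2 * k + k - 1) / k = 2 := by
    exact Nat.div_eq_of_lt_le (by omega) (by omega)
  omega
end

section
/- Let G be the disjoint union of k pairwise vertex-disjoint copies of the star K_{1,k}. Then G is not proportionally k-choosable. -/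
open Finset

variable {V : Type*}

/-!
Give every vertex color `0` together with `k - 1` colors private to its star: the leaves of
star `i` share the block `[i k + 1, i k + k)`, and each center gets a block of its own. Since
`η(0) = k (k + 1)` is divisible by `k`, color `0` must be used exactly `k + 1` times, and each
shared leaf color has `η = k`, so it is used exactly once. The `k` leaves of a star thus spend
`k - 1` of their colors on their block and at most one of them gets `0`; a center is adjacent
to its leaves, so every star has at most one vertex colored `0`, i.e. at most `k` in total.
-/

lemma IsProportionalColoring.colorClass_eq_of_dvd [Fintype V] {G : SimpleGraph V}
    {L : V → Finset ℕ} {k : ℕ} {f : V → ℕ} (hf : IsProportionalColoring G L k f) (hk : 0 < k)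
    {c : ℕ} (hc : ∃ v, c ∈ L v) (hdvd : k ∣ eta L c) :
    colorClass f c = eta L c / k := by
  obtain ⟨m, hm⟩ := hdvd
  have hceil : (k * m + k - 1) / k = m :=
    Nat.div_eq_of_lt_le (by rw [mul_comm]; omega) (by rw [add_mul, mul_comm]; omega)
  rcases hf.2 c hc with h | h <;> rw [h, hm]
  rw [hceil, Nat.mul_div_cancel_left m hk]

lemma card_filter_eq_add_card_le_of_subset_image {ι α : Type*} [Fintype ι] [DecidableEq α]
    (g : ι → α) {S : Finset α} {a : α} (ha : a ∉ S) (hS : S ⊆ univ.image g) :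
    #{i | g i = a} + #S ≤ Fintype.card ι := by
  have hS' : S ⊆ ({i | g i ≠ a} : Finset ι).image g := by
    intro s hs
    obtain ⟨i, -, rfl⟩ := mem_image.1 (hS hs)
    exact mem_image_of_mem g (mem_filter.2 ⟨mem_univ i, fun h => ha (h ▸ hs)⟩)
  calc #{i | g i = a} + #S ≤ #{i | g i = a} + #{i | g i ≠ a} := by
        gcongr
        exact (card_le_card hS').trans card_image_le
    _ = Fintype.card ι := card_filter_add_card_filter_not _

namespace StarForest

variable (k : ℕ)

/-- Vertex `(i, Sum.inl ())` is the center of star `i`, and `(i, Sum.inr j)` its leaves. -/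
abbrev graph : SimpleGraph (Fin k × (Unit ⊕ Fin k)) :=
  SimpleGraph.fromRel fun x y => x.1 = y.1 ∧ x.2.isLeft ∧ y.2.isRight

def privateColors (n : ℕ) : Finset ℕ := Ico (n * k + 1) (n * k + k)

def lists : Fin k × (Unit ⊕ Fin k) → Finset ℕ
  | (i, Sum.inl _) => insert 0 (privateColors k (k + i))
  | (i, Sum.inr _) => insert 0 (privateColors k i)

variable {k}

lemma zero_notMem_privateColors (n : ℕ) : 0 ∉ privateColors k n := by
  simp [privateColors]

lemma div_eq_of_mem_privateColors {n c : ℕ} (hc : c ∈ privateColors k n) : c / k = n := by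
  rw [privateColors, mem_Ico] at hc
  exact Nat.div_eq_of_lt_le (by omega) (by rw [add_one_mul]; omega)

lemma eq_of_mem_insert_zero_privateColors {n m c : ℕ} (hc : c ∈ privateColors k n)
    (hm : c ∈ insert 0 (privateColors k m)) : m = n := by
  rcases mem_insert.1 hm with rfl | hm
  · exact absurd hc (zero_notMem_privateColors n)
  · rw [← div_eq_of_mem_privateColors hm, div_eq_of_mem_privateColors hc]

lemma card_lists (hk : 1 ≤ k) (v : Fin k × (Unit ⊕ Fin k)) : #(lists k v) = k := by
  rcases v with ⟨i, _ | _⟩ <;>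
  · rw [lists, card_insert_of_notMem (zero_notMem_privateColors _), privateColors, Nat.card_Ico]
    omega

lemma mem_lists_iff {i : Fin k} {c : ℕ} (hc : c ∈ privateColors k i)
    {v : Fin k × (Unit ⊕ Fin k)} : c ∈ lists k v ↔ ∃ j, v = (i, Sum.inr j) := by
  rcases v with ⟨i', _ | j⟩
  · simp only [lists, Prod.mk.injEq, reduceCtorEq, and_false, exists_false, iff_false]
    intro h
    have := eq_of_mem_insert_zero_privateColors hc h
    omega
  · simp only [lists, Prod.mk.injEq, Sum.inr.injEq, exists_eq_right']
    exact ⟨fun h => Fin.ext (eq_of_mem_insert_zero_privateColors hc h),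
      fun h => h ▸ mem_insert_of_mem hc⟩

lemma eta_zero : eta (lists k) 0 = k * (k + 1) := by
  rw [eta, filter_true_of_mem fun v _ => by rcases v with ⟨i, _ | _⟩ <;> simp [lists]]
  simp [add_comm]

lemma eta_of_mem_privateColors {i : Fin k} {c : ℕ} (hc : c ∈ privateColors k i) :
    eta (lists k) c = k := by
  have : ({v | c ∈ lists k v} : Finset _) = univ.image fun j : Fin k => (i, Sum.inr j) := by
    ext v
    simp [mem_lists_iff hc, eq_comm]
  rw [eta, this, card_image_of_injective _ fun a b h => by simpa using h, card_univ,
    Fintype.card_fin]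

variable {f : Fin k × (Unit ⊕ Fin k) → ℕ} (hf : IsProportionalColoring (graph k) (lists k) k f)
include hf

lemma colorClass_zero (hk : 1 ≤ k) : colorClass f 0 = k + 1 := by
  have h := hf.colorClass_eq_of_dvd hk ⟨(⟨0, hk⟩, Sum.inl ()), mem_insert_self _ _⟩
    (by rw [eta_zero]; exact dvd_mul_right k _)
  rwa [eta_zero, Nat.mul_div_cancel_left _ hk] at h

lemma colorClass_of_mem_privateColors {i : Fin k} {c : ℕ} (hc : c ∈ privateColors k i) :
    colorClass f c = 1 := by
  have hk : 0 < k := i.pos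
  have h := hf.colorClass_eq_of_dvd hk ⟨(i, Sum.inr i), (mem_lists_iff hc).2 ⟨i, rfl⟩⟩
    (by rw [eta_of_mem_privateColors hc])
  rwa [eta_of_mem_privateColors hc, Nat.div_self hk] at h

lemma card_leaves_colored_zero_le_one (i : Fin k) : #{j | f (i, Sum.inr j) = 0} ≤ 1 := by
  have hused : privateColors k i ⊆ univ.image fun j => f (i, Sum.inr j) := by
    intro c hc
    obtain ⟨v, hv⟩ : ({v | f v = c} : Finset _).Nonempty := by
      rw [← card_pos, ← colorClass, colorClass_of_mem_privateColors hf hc]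
      exact one_pos
    rw [mem_filter] at hv
    obtain ⟨j, rfl⟩ := (mem_lists_iff hc).1 (hv.2 ▸ hf.1.1 v)
    exact mem_image.2 ⟨j, mem_univ _, hv.2⟩
  have := card_filter_eq_add_card_le_of_subset_image _ (zero_notMem_privateColors _) hused
  rw [privateColors, Nat.card_Ico, Fintype.card_fin] at this
  omega

lemma colorClass_zero_le : colorClass f 0 ≤ k := by
  have hinj : Set.InjOn Prod.fst (({v | f v = 0} : Finset _) : Set (Fin k × (Unit ⊕ Fin k))) := by
    rintro ⟨i, u⟩ hu ⟨i', u'⟩ hu' (rfl : i = i')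
    simp only [coe_filter, mem_univ, true_and, Set.mem_ofPred_eq] at hu hu'
    have hcenter (j : Fin k) : f (i, Sum.inl ()) ≠ f (i, Sum.inr j) :=
      hf.1.2 _ _ (by simp [graph])
    rcases u with ⟨⟩ | j <;> rcases u' with ⟨⟩ | j'
    · rfl
    · exact absurd (hu.trans hu'.symm) (hcenter j')
    · exact absurd (hu'.trans hu.symm) (hcenter j)
    · rw [card_le_one.1 (card_leaves_colored_zero_le_one hf i)
        j (by simpa using hu) j' (by simpa using hu')]
  simpa [colorClass] using card_le_card_of_injOn Prod.fst (fun _ _ => mem_univ _) hinj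

end StarForest

/-- The disjoint union of `k` copies of the star `K_{1,k}` is not
proportionally `k`-choosable.  Copy `i` consists of the vertices with first
coordinate `i`; `Sum.inl` is the center, the `Sum.inr`s are the leaves. -/
theorem stmt_7 (k : ℕ) (hk : 1 ≤ k) :
    ¬ ProportionallyChoosable
        (SimpleGraph.fromRel fun x y : Fin k × (Unit ⊕ Fin k) =>
          x.1 = y.1 ∧ x.2.isLeft ∧ y.2.isRight) k := by
  intro h
  obtain ⟨f, hf⟩ := h (StarForest.lists k) (StarForest.card_lists hk)
  have h_eq := StarForest.colorClass_zero hf hk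
  have h_le := StarForest.colorClass_zero_le hf
  omega
end

section
/- For every positive integer m, the complete bipartite graph K_{m,m} is not proportionally m-choosable. -/
open Finset

variable {V : Type*}

/-- The left side of `Fin m ⊕ Fin m` has `m` elements. -/
lemma cardLeftSide (m : ℕ) :
    ((univ : Finset (Fin m ⊕ Fin m)).filter (fun v => v.isLeft = true)).card = m := by
  rw [show ((univ : Finset (Fin m ⊕ Fin m)).filter (fun v => v.isLeft = true))
      = (univ : Finset (Fin m)).map ⟨Sum.inl, Sum.inl_injective⟩ by
    ext v; cases v <;> simp]
  simp

/-- If a color class has exactly two elements in a proper coloring of `K_{m,m}`, then its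
intersection with the left side is even (it is the whole class or empty). -/
lemma even_left_part {m : ℕ} (f : Fin m ⊕ Fin m → ℕ)
    (hadj : ∀ u v, (completeBipartiteGraph (Fin m) (Fin m)).Adj u v → f u ≠ f v)
    (c : ℕ) (h2 : colorClass f c = 2) :
    Even (((univ : Finset (Fin m ⊕ Fin m)).filter (fun v => v.isLeft = true)).filter
      (fun v => f v = c)).card := by
  classical
  set S : Finset (Fin m ⊕ Fin m) := univ.filter (fun v => f v = c) with hS
  have hcard : S.card = 2 := h2
  have hEq : ((univ : Finset (Fin m ⊕ Fin m)).filter (fun v => v.isLeft = true)).filter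
      (fun v => f v = c) = S.filter (fun v => v.isLeft = true) := by
    ext v; simp [hS, and_comm]
  rw [hEq]
  have hsplit : (S.filter (fun v => v.isLeft = true)).card
      + (S.filter (fun v => ¬ v.isLeft = true)).card = S.card :=
    Finset.card_filter_add_card_filter_not _
  have hle : (S.filter (fun v => v.isLeft = true)).card ≤ 2 := by
    rw [← hcard]; exact Finset.card_filter_le _ _
  have hne : (S.filter (fun v => v.isLeft = true)).card ≠ 1 := by
    intro h1
    have h1' : 0 < (S.filter (fun v => ¬ v.isLeft = true)).card := by omega
    obtain ⟨u, hu⟩ := Finset.card_pos.mp (by omega :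
      0 < (S.filter (fun v => v.isLeft = true)).card)
    obtain ⟨v, hv⟩ := Finset.card_pos.mp h1'
    simp only [hS, Finset.mem_filter, Finset.mem_univ, true_and] at hu hv
    obtain ⟨hfu, hul⟩ := hu
    obtain ⟨hfv, hvl⟩ := hv
    cases u with
    | inr u => simp at hul
    | inl u =>
      cases v with
      | inl v => simp at hvl
      | inr v =>
        exact hadj (Sum.inl u) (Sum.inr v) (by simp) (hfu.trans hfv.symm)
  have : (S.filter (fun v => v.isLeft = true)).card = 0
      ∨ (S.filter (fun v => v.isLeft = true)).card = 2 := by omega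
  rcases this with h | h <;> rw [h] <;> decide

theorem stmt_8 (m : ℕ) (hm : 1 ≤ m) :
    ¬ ProportionallyChoosable (completeBipartiteGraph (Fin m) (Fin m)) m := by
  classical
  intro h
  have hm0 : 0 < m := hm
  set A : Finset (Fin m ⊕ Fin m) := univ.filter (fun v => v.isLeft = true) with hA
  have hAcard : A.card = m := cardLeftSide m
  -- useful division facts
  have hdiv2 : (2 * m) / m = 2 := by rw [Nat.mul_div_cancel _ hm0]
  have hdiv2' : (2 * m + m - 1) / m = 2 := by
    rw [show 2*m+m-1 = (m-1)+2*m by omega, Nat.add_mul_div_right _ _ hm0,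
      Nat.div_eq_of_lt (by omega)]
  have hdiv1 : m / m = 1 := Nat.div_self hm0
  have hdiv1' : (m + m - 1) / m = 1 := by
    rw [show m+m-1 = (m-1)+1*m by omega, Nat.add_mul_div_right _ _ hm0,
      Nat.div_eq_of_lt (by omega)]
  rcases Nat.even_or_odd m with hev | hod
  · -- even case: left lists {0,…,m-1}, right lists {1,…,m}
    set L : Fin m ⊕ Fin m → Finset ℕ :=
      fun v => v.elim (fun _ => Finset.range m) (fun _ => Finset.Ico 1 (m+1)) with hL
    obtain ⟨f, ⟨hmem, hadj⟩, hprop⟩ := h L (by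
      intro v; cases v <;> simp [hL])
    -- eta values
    have heta0 : eta L 0 = m := by
      have : (univ : Finset (Fin m ⊕ Fin m)).filter (fun v => 0 ∈ L v) = A := by
        ext v; cases v <;> simp [hL, hA, hm0]
      rw [eta, this, hAcard]
    have hetamid : ∀ c, 1 ≤ c → c < m → eta L c = 2 * m := by
      intro c h1 h2
      have : (univ : Finset (Fin m ⊕ Fin m)).filter (fun v => c ∈ L v) = univ := by
        ext v; cases v <;> simp [hL, h1, h2, Nat.lt_succ_of_lt h2]
      rw [eta, this, card_univ]
      simp [two_mul]
    -- class sizes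
    have hcc0 : colorClass f 0 = 1 := by
      rcases hprop 0 ⟨Sum.inl ⟨0, hm0⟩, by simp [hL, hm0]⟩ with h | h <;>
        rw [h, heta0] <;> [exact hdiv1; exact hdiv1']
    have hccmid : ∀ c, 1 ≤ c → c < m → colorClass f c = 2 := by
      intro c h1 h2
      rcases hprop c ⟨Sum.inl ⟨0, hm0⟩, by simp [hL, h2]⟩ with h | h <;>
        rw [h, hetamid c h1 h2] <;> [exact hdiv2; exact hdiv2']
    -- decompose the left side by colors in range (m+1)
    have hfiber : A.card = ∑ c ∈ range (m+1), (A.filter (fun v => f v = c)).card := by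
      apply Finset.card_eq_sum_card_fiberwise
      intro v hv
      have := hmem v
      cases v <;> simp [hL, Finset.mem_range, Finset.mem_Ico] at this ⊢ <;> omega
    -- the c = m term is zero
    have hmterm : (A.filter (fun v => f v = m)).card = 0 := by
      rw [Finset.card_eq_zero]
      ext v
      simp only [hA, Finset.mem_filter, Finset.mem_univ, true_and, Finset.notMem_empty,
        iff_false, not_and]
      intro hvl hfv
      cases v with
      | inl i =>
        have := hmem (Sum.inl i)
        simp [hL, hfv] at this
      | inr j => simp at hvl
    -- the c = 0 term is one
    have h0term : (A.filter (fun v => f v = 0)).card = 1 := by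
      have : A.filter (fun v => f v = 0) = univ.filter (fun v => f v = 0) := by
        ext v
        simp only [hA, Finset.mem_filter, Finset.mem_univ, true_and]
        constructor
        · rintro ⟨_, h⟩; exact h
        · intro h0
          refine ⟨?_, h0⟩
          cases v with
          | inl i => simp
          | inr j =>
            have := hmem (Sum.inr j)
            simp [hL, h0] at this
      rw [this]
      exact hcc0
    -- middle terms are even
    have hmidsum : Even (∑ c ∈ Ico 1 m, (A.filter (fun v => f v = c)).card) := by
      apply Finset.even_sum (f := fun c => (A.filter (fun v => f v = c)).card)
      intro c hc
      simp only [Finset.mem_Ico] at hc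
      exact even_left_part f hadj c (hccmid c hc.1 hc.2)
    -- assemble: m = 1 + even + 0
    have hsum : m = 1 + (∑ c ∈ Ico 1 m, (A.filter (fun v => f v = c)).card) := by
      have h1 : ∑ c ∈ range (m+1), (A.filter (fun v => f v = c)).card
          = ∑ c ∈ range m, (A.filter (fun v => f v = c)).card
            + (A.filter (fun v => f v = m)).card := Finset.sum_range_succ _ m
      have h2 : ∑ c ∈ range m, (A.filter (fun v => f v = c)).card
          = (A.filter (fun v => f v = 0)).card
            + ∑ c ∈ Ico 1 m, (A.filter (fun v => f v = c)).card := by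
        rw [Finset.range_eq_Ico]
        exact Finset.sum_eq_sum_Ico_succ_bot hm0 _
      omega
    obtain ⟨k, hk⟩ := hmidsum
    obtain ⟨l, hl⟩ := hev
    omega
  · -- odd case: all lists {0,…,m-1}
    set L : Fin m ⊕ Fin m → Finset ℕ := fun _ => Finset.range m with hL
    obtain ⟨f, ⟨hmem, hadj⟩, hprop⟩ := h L (by intro v; simp [hL])
    have hetac : ∀ c, c < m → eta L c = 2 * m := by
      intro c hc
      have : (univ : Finset (Fin m ⊕ Fin m)).filter (fun v => c ∈ L v) = univ := by
        ext v; simp [hL, hc]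
      rw [eta, this, card_univ]
      simp [two_mul]
    have hcc : ∀ c, c < m → colorClass f c = 2 := by
      intro c hc
      rcases hprop c ⟨Sum.inl ⟨0, hm0⟩, by simp [hL, hc]⟩ with h | h <;>
        rw [h, hetac c hc] <;> [exact hdiv2; exact hdiv2']
    have hfiber : A.card = ∑ c ∈ range m, (A.filter (fun v => f v = c)).card := by
      apply Finset.card_eq_sum_card_fiberwise
      intro v hv
      have := hmem v
      simpa [hL] using this
    have hEv : Even (∑ c ∈ range m, (A.filter (fun v => f v = c)).card) := by
      apply Finset.even_sum (f := fun c => (A.filter (fun v => f v = c)).card)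
      intro c hc
      simp only [Finset.mem_range] at hc
      exact even_left_part f hadj c (hcc c hc)
    rw [← hfiber, hAcard] at hEv
    obtain ⟨k, hk⟩ := hEv
    obtain ⟨l, hl⟩ := hod
    omega
end

section
/- If a graph G is proportionally 2-choosable, then G is a linear forest whose largest component has at most 5 vertices and all of whose other components have at most 2 vertices. -/
open Finset

variable {V : Type*}

/-- `G` is a linear forest: an acyclic graph with maximum degree at most 2. -/
def IsLinearForest (G : SimpleGraph V) : Prop :=
  G.IsAcyclic ∧ ∀ v : V, (G.neighborSet v).ncard ≤ 2

/-- Every component of `G` has at most 5 vertices, and at most one component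
has more than 2 vertices. -/
def SmallComponents (G : SimpleGraph V) : Prop :=
  (∀ c : G.ConnectedComponent, c.supp.ncard ≤ 5) ∧
  ∀ c d : G.ConnectedComponent, c ≠ d → c.supp.ncard ≤ 2 ∨ d.supp.ncard ≤ 2

/-!
Proportional 2-choosability passes to (not necessarily induced) subgraphs: vertices outside a copy
get a common list of fresh colours. The claw, the cycles `C₃`, `C₄`, `C₅` and the disjoint union
`P₃ + P₃` each carry a 2-assignment without proportional colouring, so none of them lies in `G`.
Excluding the claw bounds all degrees by 2. A longer cycle contains `P₆ ⊇ P₃ + P₃`. In a graph of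
maximum degree 2, a longest path starting in a component covers that component, so a component on
six vertices, or two components on three vertices each, would also contain `P₃ + P₃`.
-/

open SimpleGraph

theorem Finset.card_filter_comp_eq_of_injective {α β : Type*} [Fintype α] [Fintype β]
    {φ : α → β} (hφ : Function.Injective φ) {P : β → Prop} [DecidablePred P]
    (hP : ∀ b, P b → b ∈ Set.range φ) :
    #{a | P (φ a)} = #{b | P b} := by
  classical
  rw [← card_image_of_injective _ hφ]
  congr 1
  ext b
  simp only [mem_filter, mem_univ, true_and, mem_image]
  refine ⟨fun ⟨a, ha, hab⟩ => hab ▸ ha, fun hb => ?_⟩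
  obtain ⟨a, rfl⟩ := hP b hb
  exact ⟨a, hb, rfl⟩

theorem ProportionallyChoosable.of_isContained {W : Type*} [Fintype V] [Fintype W]
    {G : SimpleGraph V} {H : SimpleGraph W} {k : ℕ}
    (hG : ProportionallyChoosable G k) (hHG : H ⊑ G) : ProportionallyChoosable H k := by
  classical
  obtain ⟨φ⟩ := hHG
  intro L hL
  obtain ⟨N, hN⟩ : ∃ N, ∀ w, ∀ c ∈ L w, c < N :=
    ⟨(univ.biUnion L).sup id + 1, fun w c hc =>
      Nat.lt_succ_of_le (le_sup (f := id) (mem_biUnion.2 ⟨w, mem_univ w, hc⟩))⟩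
  obtain ⟨L', hL'φ, hL'out⟩ : ∃ L' : V → Finset ℕ,
      (∀ w, L' (φ w) = L w) ∧ ∀ v ∉ Set.range φ, L' v = Ico N (N + k) :=
    ⟨Function.extend φ L fun _ => Ico N (N + k), φ.injective.extend_apply _ _,
      fun v hv => Function.extend_apply' _ _ _ hv⟩
  have hL' : ∀ v, (L' v).card = k := fun v => by
    by_cases hv : v ∈ Set.range φ
    · obtain ⟨w, rfl⟩ := hv; rw [hL'φ, hL]
    · simp [hL'out v hv]
  have hmem_range : ∀ v, ∀ c ∈ L' v, c < N → v ∈ Set.range φ := fun v c hc hcN =>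
    by_contra fun hv => by simp [hL'out v hv] at hc; omega
  obtain ⟨f, ⟨hfL', hfG⟩, hfη⟩ := hG L' hL'
  refine ⟨f ∘ φ, ⟨fun w => hL'φ w ▸ hfL' (φ w), fun u v huv => hfG _ _ (φ.toHom.map_adj huv)⟩,
    fun c ⟨w, hcw⟩ => ?_⟩
  have hcN : c < N := hN w c hcw
  have hclass : colorClass (f ∘ φ) c = colorClass f c :=
    card_filter_comp_eq_of_injective (P := fun v => f v = c) φ.injective
      fun v hv => hmem_range v c (hv ▸ hfL' v) hcN
  have heta : eta L c = eta L' c := by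
    simp only [eta, ← hL'φ]
    exact card_filter_comp_eq_of_injective (P := fun v => c ∈ L' v) φ.injective
      fun v hv => hmem_range v c hv hcN
  rw [hclass, heta]
  exact hfη c ⟨φ w, (hL'φ w).symm ▸ hcw⟩

instance [Fintype V] (G : SimpleGraph V) [DecidableRel G.Adj] (L : V → Finset ℕ) (k : ℕ)
    (f : V → ℕ) : Decidable (IsProportionalColoring G L k f) :=
  decidable_of_iff ((∀ v, f v ∈ L v) ∧ (∀ u v, G.Adj u v → f u ≠ f v) ∧
      ∀ v, ∀ c ∈ L v, colorClass f c = eta L c / k ∨ colorClass f c = (eta L c + k - 1) / k) <| by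
    simp only [IsProportionalColoring, IsProperListColoring, and_assoc, forall_exists_index]
    exact and_congr_right fun _ => and_congr_right fun _ => forall_comm

instance (n : ℕ) : DecidableRel (pathGraph n).Adj := fun _ _ =>
  decidable_of_iff _ pathGraph_adj.symm

instance {W : Type*} {G : SimpleGraph V} {H : SimpleGraph W} [DecidableRel G.Adj]
    [DecidableRel H.Adj] : DecidableRel (G ⊕g H).Adj
  | .inl _, .inl _ => decidable_of_iff _ sum_adj_inl.symm
  | .inr _, .inr _ => decidable_of_iff _ sum_adj_inr.symm
  | .inl _, .inr _ => isFalse (not_adj_sum_inl_inr _ _)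
  | .inr _, .inl _ => isFalse fun h => not_adj_sum_inl_inr _ _ h.symm

theorem not_proportionallyChoosable_of_forall_not [Fintype V] {G : SimpleGraph V} {k : ℕ}
    (L : V → Finset ℕ) (hL : ∀ v, (L v).card = k)
    (hbad : ∀ g : (v : V) → L v, ¬ IsProportionalColoring G L k fun v => g v) :
    ¬ ProportionallyChoosable G k := fun h => by
  obtain ⟨f, hf⟩ := h L hL
  exact hbad (fun v => ⟨f v, hf.1.1 v⟩) hf

theorem not_proportionallyChoosable_starGraph :
    ¬ ProportionallyChoosable (starGraph (0 : Fin 4)) 2 :=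
  not_proportionallyChoosable_of_forall_not (fun _ => {0, 1}) (by decide) (by decide)

theorem not_proportionallyChoosable_cycleGraph_three : ¬ ProportionallyChoosable (cycleGraph 3) 2 :=
  not_proportionallyChoosable_of_forall_not (fun _ => {0, 1}) (by decide) (by decide)

-- colour `0` must go to two opposite vertices, and then colour `1` or `2` is used twice
theorem not_proportionallyChoosable_cycleGraph_four : ¬ ProportionallyChoosable (cycleGraph 4) 2 :=
  not_proportionallyChoosable_of_forall_not ![{0, 1}, {0, 2}, {0, 1}, {0, 2}] (by decide)
    (by decide)

theorem not_proportionallyChoosable_cycleGraph_five : ¬ ProportionallyChoosable (cycleGraph 5) 2 :=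
  not_proportionallyChoosable_of_forall_not (fun _ => {0, 1}) (by decide) (by decide)

-- colour `0` must be used three times and each of the colours `1`, `2`, `3` exactly once
theorem not_proportionallyChoosable_pathGraph_sum :
    ¬ ProportionallyChoosable (pathGraph 3 ⊕g pathGraph 3) 2 :=
  not_proportionallyChoosable_of_forall_not
    (Sum.elim ![{0, 1}, {0, 2}, {0, 1}] ![{0, 3}, {0, 2}, {0, 3}]) (by decide) (by decide)

namespace SimpleGraph

variable {α β γ : Type*} {A : SimpleGraph α} {B : SimpleGraph β} {C : SimpleGraph γ}

def Copy.sum (f : Copy A C) (g : Copy B C) (hfg : ∀ a b, f a ≠ g b) : Copy (A ⊕g B) C where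
  toHom := ⟨Sum.elim f g, fun {x y} hxy => by
    rcases x with a | b <;> rcases y with a' | b'
    · exact f.toHom.map_adj hxy
    · exact absurd hxy (not_adj_sum_inl_inr _ _)
    · exact absurd hxy.symm (not_adj_sum_inl_inr _ _)
    · exact g.toHom.map_adj hxy⟩
  injective' := f.injective.sumElim g.injective hfg

theorem pathGraph_isContained_pathGraph {m n : ℕ} (h : m ≤ n) : pathGraph m ⊑ pathGraph n :=
  ⟨⟨⟨Fin.castLE h, fun hij => by simpa [pathGraph_adj] using hij⟩, Fin.castLE_injective h⟩⟩

theorem pathGraph_sum_isContained_pathGraph (m n : ℕ) :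
    pathGraph m ⊕g pathGraph n ⊑ pathGraph (m + n) :=
  ⟨Copy.sum
    ⟨⟨Fin.castAdd n, fun hij => by simpa [pathGraph_adj] using hij⟩, Fin.castAdd_injective m n⟩
    ⟨⟨Fin.natAdd m, fun hij => by simp only [pathGraph_adj, Fin.val_natAdd] at hij ⊢; omega⟩,
      Fin.natAdd_injective n m⟩
    fun i j => Fin.ne_of_lt
      (show Fin.castAdd n i < Fin.natAdd m j from Fin.lt_def.2 (by simp; omega))⟩

theorem starGraph_isContained_of_le_ncard_neighborSet [Finite V] {G : SimpleGraph V} {n : ℕ}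
    {v : V} (h : n ≤ (G.neighborSet v).ncard) : starGraph (0 : Fin (n + 1)) ⊑ G := by
  rw [← Nat.card_coe_set_eq] at h
  let e : Fin n ↪ G.neighborSet v := (Fin.castLEEmb h).trans (Finite.equivFin _).symm.toEmbedding
  refine ⟨⟨⟨Fin.cons v fun i => e i, fun {i j} hij => ?_⟩, Fin.cons_injective_iff.2
    ⟨fun ⟨i, hi⟩ => G.ne_of_adj (e i).2 hi.symm, Subtype.val_injective.comp e.injective⟩⟩⟩
  induction i using Fin.cases <;> induction j using Fin.cases <;> simp_all [Fin.succ_ne_zero]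
  · exact (e _).2
  · exact (e _).2.symm

theorem isAcyclic_of_free {G : SimpleGraph V} {m : ℕ}
    (hcycle : ∀ n, 3 ≤ n → n < m → (cycleGraph n).Free G) (hpath : (pathGraph m).Free G) :
    G.IsAcyclic := by
  intro v p hp
  have hC : cycleGraph p.length ⊑ G :=
    (cycleGraph_isContained_iff hp.three_le_length).2 ⟨v, p, hp, rfl⟩
  by_cases hlen : p.length < m
  · exact hcycle _ hp.three_le_length hlen hC
  · exact hpath <| (pathGraph_isContained_pathGraph (not_lt.1 hlen)).trans <|
      hC.mono_left pathGraph_le_cycleGraph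

theorem ConnectedComponent.mem_supp_of_mem_support {G : SimpleGraph V} {c : G.ConnectedComponent}
    {u v x : V} {p : G.Walk u v} (hu : u ∈ c.supp) (hx : x ∈ p.support) : x ∈ c.supp := by
  classical
  exact (ConnectedComponent.sound (p.takeUntil x hx).reachable).symm.trans hu

section MaxDegreeTwo

variable [Finite V] {G : SimpleGraph V} (hdeg : ∀ v, (G.neighborSet v).ncard ≤ 2)
include hdeg

theorem ConnectedComponent.supp_subset_support_of_isPath {c : G.ConnectedComponent} {u v : V}
    {p : G.Walk u v} (hp : p.IsPath) (hu : u ∈ c.supp)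
    (hmax : ∀ u' v' (q : G.Walk u' v'), q.IsPath → u' ∈ c.supp → q.length ≤ p.length) :
    c.supp ⊆ {w | w ∈ p.support} := by
  intro w hw
  by_contra hwp
  obtain ⟨d, -, hx, hy⟩ := (c.reachable_of_mem_supp hu hw).some.exists_boundary_dart
    {w | w ∈ p.support} p.start_mem_support hwp
  have hyc : d.snd ∈ c.supp := (ConnectedComponent.connectedComponentMk_eq_of_adj d.adj).symm.trans
    (c.mem_supp_of_mem_support hu hx)
  -- `p` cannot be extended by `d.snd` at either end, so `d.fst` is an inner vertex of `p`
  have hxu : d.fst ≠ u := fun h => (hmax _ _ (.cons (h ▸ d.adj.symm) p) (hp.cons hy) hyc).not_gt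
    (by simp)
  have hxv : d.fst ≠ v := fun h => (hmax _ _ (.cons (h ▸ d.adj.symm) p.reverse)
    (hp.reverse.cons (by simpa using hy)) hyc).not_gt (by simp)
  obtain ⟨i, hi, hilen⟩ := p.mem_support_iff_exists_getVert.1 hx
  have htwo := hp.ncard_neighborSet_toSubgraph_internal_eq_two (i := i)
    (by rintro rfl; simp [← hi] at hxu) (lt_of_le_of_ne hilen (by rintro rfl; simp [← hi] at hxv))
  rw [hi] at htwo
  have hnew : d.snd ∉ p.toSubgraph.neighborSet d.fst := fun h =>
    hy (p.mem_verts_toSubgraph.1 (p.toSubgraph.edge_vert h.symm))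
  have hsub : insert d.snd (p.toSubgraph.neighborSet d.fst) ⊆ G.neighborSet d.fst :=
    Set.insert_subset d.adj (p.toSubgraph.neighborSet_subset _)
  have := Set.ncard_le_ncard hsub
  rw [Set.ncard_insert_of_notMem hnew, htwo] at this
  linarith [hdeg d.fst]

theorem ConnectedComponent.exists_copy_pathGraph_of_le_ncard_supp {c : G.ConnectedComponent}
    {k : ℕ} (hk : k ≤ c.supp.ncard) : ∃ f : Copy (pathGraph k) G, ∀ i, f i ∈ c.supp := by
  classical
  have := Fintype.ofFinite V
  set S : Set ℕ := {n | ∃ u v : V, ∃ p : G.Walk u v, p.IsPath ∧ u ∈ c.supp ∧ p.length = n}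
  have hS : S.Nonempty := by
    obtain ⟨u, hu⟩ := c.exists_rep
    exact ⟨0, u, u, .nil, .nil, hu, rfl⟩
  have hbdd : BddAbove S :=
    ⟨Fintype.card V, by rintro _ ⟨u, v, p, hp, -, rfl⟩; exact hp.length_lt.le⟩
  obtain ⟨u, v, p, hp, hu, hlen⟩ := Nat.sSup_mem hS hbdd
  have hsupp := c.supp_subset_support_of_isPath hdeg hp hu fun u' v' q hq hu' =>
    hlen ▸ le_csSup hbdd ⟨u', v', q, hq, hu', rfl⟩
  have hcard : k ≤ p.length + 1 := calc
    k ≤ c.supp.ncard := hk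
    _ ≤ {w | w ∈ p.support}.ncard := Set.ncard_le_ncard hsupp
    _ = p.length + 1 := by
      rw [← List.coe_toFinset, Set.ncard_coe_finset, List.toFinset_card_of_nodup hp.support_nodup,
        p.length_support]
  obtain ⟨g⟩ := pathGraph_isContained_pathGraph hcard
  exact ⟨hp.pathGraphCopy.comp g, fun i => c.mem_supp_of_mem_support hu
    (p.mem_verts_toSubgraph.1 (hp.pathGraphIsoToSubgraph (g i)).2)⟩

end MaxDegreeTwo

end SimpleGraph

theorem stmt_10 [Fintype V] (G : SimpleGraph V)
    (h : ProportionallyChoosable G 2) :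
    IsLinearForest G ∧ SmallComponents G := by
  have hP6 : (pathGraph 6).Free G := fun hP6 => not_proportionallyChoosable_pathGraph_sum <|
    h.of_isContained <| (pathGraph_sum_isContained_pathGraph 3 3).trans hP6
  have hdeg : ∀ v, (G.neighborSet v).ncard ≤ 2 := fun v => not_lt.1 fun h3 =>
    not_proportionallyChoosable_starGraph <| h.of_isContained <|
      starGraph_isContained_of_le_ncard_neighborSet h3
  have hacyclic : G.IsAcyclic := by
    refine isAcyclic_of_free (fun n h3 h6 hC => ?_) hP6
    interval_cases n
    · exact not_proportionallyChoosable_cycleGraph_three (h.of_isContained hC)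
    · exact not_proportionallyChoosable_cycleGraph_four (h.of_isContained hC)
    · exact not_proportionallyChoosable_cycleGraph_five (h.of_isContained hC)
  refine ⟨⟨hacyclic, hdeg⟩, fun c => not_lt.1 fun h6 => ?_, fun c d hcd => ?_⟩
  · obtain ⟨f, -⟩ := c.exists_copy_pathGraph_of_le_ncard_supp hdeg h6
    exact hP6 ⟨f⟩
  · by_contra! h3
    obtain ⟨f, hf⟩ := c.exists_copy_pathGraph_of_le_ncard_supp hdeg h3.1
    obtain ⟨g, hg⟩ := d.exists_copy_pathGraph_of_le_ncard_supp hdeg h3.2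
    refine not_proportionallyChoosable_pathGraph_sum <| h.of_isContained
      ⟨f.sum g fun i j hij => hcd ?_⟩
    rw [← (c.mem_supp_iff _).1 (hf i), ← (d.mem_supp_iff _).1 (hg j), hij]
end

section
/- For every n ≥ 6, the path P_n on n vertices is not proportionally 2-choosable; that is, χ_pc(P_n) > 2. -/
open Finset

variable {V : Type*}

/-- The bad lists on the first six vertices. -/
def badL (m : ℕ) : Finset ℕ :=
  if m = 0 then {1, 2} else if m = 1 then {1, 3} else if m = 2 then {1, 2}
  else if m = 3 then {1, 4} else if m = 4 then {1, 3} else {1, 4}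

lemma filter_small {n : ℕ} (hn : 6 ≤ n) (p : Fin n → Prop) [DecidablePred p]
    (hp : ∀ x, p x → x.val < 6) :
    (Finset.univ.filter p).card
      = (Finset.univ.filter fun j : Fin 6 => p ⟨j.val, lt_of_lt_of_le j.isLt hn⟩).card := by
  rw [show (Finset.univ.filter p)
      = (Finset.univ.filter fun j : Fin 6 => p ⟨j.val, lt_of_lt_of_le j.isLt hn⟩).map
        ⟨fun j => ⟨j.val, lt_of_lt_of_le j.isLt hn⟩,
         fun a b hab => Fin.ext (by simpa using congrArg Fin.val hab)⟩ from ?_, Finset.card_map]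
  ext x
  simp only [mem_filter, mem_map, mem_univ, true_and, Function.Embedding.coeFn_mk]
  constructor
  · intro hx
    refine ⟨⟨x.val, hp x hx⟩, ?_, rfl⟩
    convert hx
  · rintro ⟨j, hj, rfl⟩
    exact hj

lemma key (b0 b1 b2 b3 b4 b5 : ℕ)
    (m0 : b0 = 1 ∨ b0 = 2) (m1 : b1 = 1 ∨ b1 = 3) (m2 : b2 = 1 ∨ b2 = 2)
    (m3 : b3 = 1 ∨ b3 = 4) (m4 : b4 = 1 ∨ b4 = 3) (m5 : b5 = 1 ∨ b5 = 4)
    (h01 : b0 ≠ b1) (h12 : b1 ≠ b2) (h23 : b2 ≠ b3) (h34 : b3 ≠ b4) (h45 : b4 ≠ b5)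
    (hc1 : ((if b0 = 1 then 1 else 0) + (if b1 = 1 then 1 else 0) + (if b2 = 1 then 1 else 0)
      + (if b3 = 1 then 1 else 0) + (if b4 = 1 then 1 else 0) + (if b5 = 1 then 1 else 0)) = 3)
    (hc2 : ((if b0 = 2 then 1 else 0) + (if b1 = 2 then 1 else 0) + (if b2 = 2 then 1 else 0)
      + (if b3 = 2 then 1 else 0) + (if b4 = 2 then 1 else 0) + (if b5 = 2 then 1 else 0)) = 1)
    (hc3 : ((if b0 = 3 then 1 else 0) + (if b1 = 3 then 1 else 0) + (if b2 = 3 then 1 else 0)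
      + (if b3 = 3 then 1 else 0) + (if b4 = 3 then 1 else 0) + (if b5 = 3 then 1 else 0)) = 1)
    (hc4 : ((if b0 = 4 then 1 else 0) + (if b1 = 4 then 1 else 0) + (if b2 = 4 then 1 else 0)
      + (if b3 = 4 then 1 else 0) + (if b4 = 4 then 1 else 0) + (if b5 = 4 then 1 else 0)) = 1)
    : False := by
  rcases m0 with rfl | rfl <;> rcases m1 with rfl | rfl <;> rcases m2 with rfl | rfl <;>
    rcases m3 with rfl | rfl <;> rcases m4 with rfl | rfl <;> rcases m5 with rfl | rfl <;>
    simp_all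

theorem stmt_12 (n : ℕ) (hn : 6 ≤ n) :
    ¬ ProportionallyChoosable (SimpleGraph.pathGraph n) 2 := by
  intro hch
  set L : Fin n → Finset ℕ :=
    fun i => if i.val < 6 then badL i.val else {100 + 2 * i.val, 101 + 2 * i.val} with hL
  have hLcard : ∀ v : Fin n, (L v).card = 2 := by
    intro v
    by_cases hv : v.val < 6
    · simp only [hL, if_pos hv]
      interval_cases h : v.val <;> decide
    · simp only [hL, if_neg hv]
      rw [Finset.card_insert_of_notMem (by simp), Finset.card_singleton]
  obtain ⟨f, ⟨⟨hmem, hprop⟩, hcount⟩⟩ := hch L hLcard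
  -- lists of the first six vertices
  have hLsmall : ∀ (i : ℕ) (hi : i < 6), L ⟨i, lt_of_lt_of_le hi hn⟩ = badL i := by
    intro i hi
    simp [hL, hi]
  -- small colors appear only on the first six vertices
  have hnot : ∀ (c : ℕ), c ≤ 4 → ∀ x : Fin n, ¬ x.val < 6 → c ∉ L x := by
    intro c hc x hx hcx
    rw [hL] at hcx
    simp only [if_neg hx, Finset.mem_insert, Finset.mem_singleton] at hcx
    omega
  -- colorClass of small colors reduces to the first six vertices
  have hccs : ∀ (c : ℕ), 1 ≤ c → c ≤ 4 →
      colorClass f c = (Finset.univ.filter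
        fun j : Fin 6 => f ⟨j.val, lt_of_lt_of_le j.isLt hn⟩ = c).card := by
    intro c h1 h4
    exact filter_small hn _ (fun x hx => by
      by_contra hx6
      exact hnot c h4 x hx6 (hx ▸ hmem x))
  have hetas : ∀ (c : ℕ), 1 ≤ c → c ≤ 4 →
      eta L c = (Finset.univ.filter
        fun j : Fin 6 => c ∈ badL j.val).card := by
    intro c h1 h4
    rw [eta, filter_small hn _ (fun x hx => by
      by_contra hx6
      exact hnot c h4 x hx6 hx)]
    exact congrArg Finset.card (Finset.filter_congr fun j _ => by rw [hLsmall j.val j.isLt])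
  -- compute the etas
  have he1 : eta L 1 = 6 := by rw [hetas 1 (by norm_num) (by norm_num)]; decide
  have he2 : eta L 2 = 2 := by rw [hetas 2 (by norm_num) (by norm_num)]; decide
  have he3 : eta L 3 = 2 := by rw [hetas 3 (by norm_num) (by norm_num)]; decide
  have he4 : eta L 4 = 2 := by rw [hetas 4 (by norm_num) (by norm_num)]; decide
  -- the values on the first six vertices
  set b : Fin 6 → ℕ := fun j => f ⟨j.val, lt_of_lt_of_le j.isLt hn⟩ with hb
  have hmemb : ∀ j : Fin 6, b j ∈ badL j.val := by
    intro j
    rw [hb, ← hLsmall j.val j.isLt]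
    exact hmem _
  have hcc : ∀ (c : ℕ), 1 ≤ c → c ≤ 4 → colorClass f c =
      ((if b 0 = c then 1 else 0) + (if b 1 = c then 1 else 0) + (if b 2 = c then 1 else 0)
      + (if b 3 = c then 1 else 0) + (if b 4 = c then 1 else 0) + (if b 5 = c then 1 else 0)) := by
    intro c h1 h4
    rw [hccs c h1 h4, Finset.card_filter, Fin.sum_univ_six]
  -- adjacency
  have hne : ∀ (i : ℕ) (hi : i + 1 < 6),
      b ⟨i, by omega⟩ ≠ b ⟨i + 1, hi⟩ := by
    intro i hi
    apply hprop
    rw [SimpleGraph.pathGraph_adj]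
    left; rfl
  -- the four count facts
  have hex1 : ∃ v, (1 : ℕ) ∈ L v := ⟨⟨0, by omega⟩, by rw [hLsmall 0 (by norm_num)]; decide⟩
  have hex2 : ∃ v, (2 : ℕ) ∈ L v := ⟨⟨0, by omega⟩, by rw [hLsmall 0 (by norm_num)]; decide⟩
  have hex3 : ∃ v, (3 : ℕ) ∈ L v := ⟨⟨1, by omega⟩, by rw [hLsmall 1 (by norm_num)]; decide⟩
  have hex4 : ∃ v, (4 : ℕ) ∈ L v := ⟨⟨3, by omega⟩, by rw [hLsmall 3 (by norm_num)]; decide⟩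
  have hc1 := hcount 1 hex1
  have hc2 := hcount 2 hex2
  have hc3 := hcount 3 hex3
  have hc4 := hcount 4 hex4
  rw [he1, hcc 1 (by norm_num) (by norm_num)] at hc1
  rw [he2, hcc 2 (by norm_num) (by norm_num)] at hc2
  rw [he3, hcc 3 (by norm_num) (by norm_num)] at hc3
  rw [he4, hcc 4 (by norm_num) (by norm_num)] at hc4
  norm_num at hc1 hc2 hc3 hc4
  have m0 : b 0 ∈ badL 0 := hmemb 0
  have m1 : b 1 ∈ badL 1 := hmemb 1
  have m2 : b 2 ∈ badL 2 := hmemb 2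
  have m3 : b 3 ∈ badL 3 := hmemb 3
  have m4 : b 4 ∈ badL 4 := hmemb 4
  have m5 : b 5 ∈ badL 5 := hmemb 5
  simp only [badL, Finset.mem_insert, Finset.mem_singleton] at m0 m1 m2 m3 m4 m5
  exact key (b 0) (b 1) (b 2) (b 3) (b 4) (b 5)
    (by simpa using m0) (by simpa using m1) (by simpa using m2)
    (by simpa using m3) (by simpa using m4) (by simpa using m5)
    (hne 0 (by norm_num)) (hne 1 (by norm_num)) (hne 2 (by norm_num))
    (hne 3 (by norm_num)) (hne 4 (by norm_num))
    hc1 hc2 hc3 hc4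
end

section
/- Let k ≥ 3 and let T be the tree obtained from a path u–v–w by attaching k pendant leaves to u, k pendant leaves to w, and 2k-1 pendant leaves to v. Then T is 2-choosable and has a bipartition into parts of equal size, but T is not equitably 2-choosable. In particular, the 2-assignment L that assigns {1,2} to v and to the leaves adjacent to v, {1,3} to u, {2,3} to the leaves adjacent to u, {2,3} to w, and {1,3} to the leaves adjacent to w, admits no equitable L-coloring. -/
open Finset

variable {V : Type*}

/-- `G` is 2-choosable. -/
def TwoChoosable (G : SimpleGraph V) : Prop :=
  ∀ L : V → Finset ℕ, (∀ v, (L v).card = 2) → ∃ f, IsProperListColoring G L f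

/-- `f` is an equitable `L`-coloring of `G` (lists of size 2): a proper
`L`-coloring in which every color is used at most `⌈n/2⌉` times. -/
def IsEquitableColoring [Fintype V] (G : SimpleGraph V) (L : V → Finset ℕ)
    (f : V → ℕ) : Prop :=
  IsProperListColoring G L f ∧ ∀ c : ℕ, colorClass f c ≤ (Fintype.card V + 1) / 2

/-- `G` is equitably 2-choosable. -/
def EquitablyTwoChoosable [Fintype V] (G : SimpleGraph V) : Prop :=
  ∀ L : V → Finset ℕ, (∀ v, (L v).card = 2) → ∃ f, IsEquitableColoring G L f

/-- The vertex type of the tree `T`: `Sum.inl 0 = u`, `Sum.inl 1 = v`,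
`Sum.inl 2 = w`; the `Sum.inr`s are the leaves attached to `u`, `w`, `v`
respectively. -/
abbrev TVert (k : ℕ) := Fin 3 ⊕ (Fin k ⊕ Fin k ⊕ Fin (2 * k - 1))

/-- The tree obtained from the path `u–v–w` by attaching `k` leaves to `u`,
`k` leaves to `w`, and `2k-1` leaves to `v`. -/
def TTree (k : ℕ) : SimpleGraph (TVert k) :=
  SimpleGraph.fromRel fun x y =>
    (x = .inl 0 ∧ y = .inl 1) ∨ (x = .inl 1 ∧ y = .inl 2) ∨
    (∃ i, x = .inl 0 ∧ y = .inr (.inl i)) ∨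
    (∃ i, x = .inl 2 ∧ y = .inr (.inr (.inl i))) ∨
    (∃ i, x = .inl 1 ∧ y = .inr (.inr (.inr i)))

lemma exists_ne_of_card_two (s : Finset ℕ) (h : s.card = 2) (c : ℕ) :
    ∃ a ∈ s, a ≠ c := by
  obtain ⟨a, b, hab, rfl⟩ := Finset.card_eq_two.mp h
  rcases eq_or_ne a c with rfl | h
  · exact ⟨b, by simp, fun hb => hab hb.symm⟩
  · exact ⟨a, by simp, h⟩

lemma ttree_adj {k : ℕ} {x y : TVert k} :
    (TTree k).Adj x y ↔ x ≠ y ∧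
      (((x = .inl 0 ∧ y = .inl 1) ∨ (x = .inl 1 ∧ y = .inl 2) ∨
        (∃ i, x = .inl 0 ∧ y = .inr (.inl i)) ∨
        (∃ i, x = .inl 2 ∧ y = .inr (.inr (.inl i))) ∨
        (∃ i, x = .inl 1 ∧ y = .inr (.inr (.inr i)))) ∨
       ((y = .inl 0 ∧ x = .inl 1) ∨ (y = .inl 1 ∧ x = .inl 2) ∨
        (∃ i, y = .inl 0 ∧ x = .inr (.inl i)) ∨
        (∃ i, y = .inl 2 ∧ x = .inr (.inr (.inl i))) ∨
        (∃ i, y = .inl 1 ∧ x = .inr (.inr (.inr i))))) := by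
  rw [TTree, SimpleGraph.fromRel_adj]

lemma key_lemma (k : ℕ) (hk : 3 ≤ k) :
    ∀ L : TVert k → Finset ℕ,
      (L (.inl 0) = {1, 3}) →
      (L (.inl 1) = {1, 2}) →
      (L (.inl 2) = {2, 3}) →
      (∀ i : Fin k, L (.inr (.inl i)) = {2, 3}) →
      (∀ i : Fin k, L (.inr (.inr (.inl i))) = {1, 3}) →
      (∀ i : Fin (2 * k - 1), L (.inr (.inr (.inr i))) = {1, 2}) →
      ¬ ∃ f, IsEquitableColoring (TTree k) L f := by
  intro L hLu hLv hLw hLlu hLlw hLlv ⟨f, ⟨⟨hmem, hadj⟩, heq⟩⟩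
  have hcard : Fintype.card (TVert k) = 4 * k + 2 := by
    simp only [TVert, Fintype.card_sum, Fintype.card_fin]
    omega
  -- adjacency facts
  have auv : (TTree k).Adj (.inl 0) (.inl 1) := by
    rw [ttree_adj]; exact ⟨by simp, Or.inl (Or.inl ⟨rfl, rfl⟩)⟩
  have avw : (TTree k).Adj (.inl 1) (.inl 2) := by
    rw [ttree_adj]; exact ⟨by simp, Or.inl (Or.inr (Or.inl ⟨rfl, rfl⟩))⟩
  have aul : ∀ i : Fin k, (TTree k).Adj (.inl 0) (.inr (.inl i)) := fun i => by
    rw [ttree_adj]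
    exact ⟨by simp, Or.inl (Or.inr (Or.inr (Or.inl ⟨i, rfl, rfl⟩)))⟩
  have awl : ∀ i : Fin k, (TTree k).Adj (.inl 2) (.inr (.inr (.inl i))) := fun i => by
    rw [ttree_adj]
    exact ⟨by simp, Or.inl (Or.inr (Or.inr (Or.inr (Or.inl ⟨i, rfl, rfl⟩))))⟩
  have avl : ∀ i : Fin (2 * k - 1), (TTree k).Adj (.inl 1) (.inr (.inr (.inr i))) := fun i => by
    rw [ttree_adj]
    exact ⟨by simp, Or.inl (Or.inr (Or.inr (Or.inr (Or.inr ⟨i, rfl, rfl⟩))))⟩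
  have hv : f (.inl 1) = 1 ∨ f (.inl 1) = 2 := by
    have := hmem (.inl 1); rw [hLv] at this; simpa using this
  rcases hv with hv | hv
  · -- f v = 1 : color 2 is used on the k leaves of u and the 2k-1 leaves of v
    have hu : f (.inl 0) = 3 := by
      have h1 := hmem (.inl 0); rw [hLu] at h1
      have h2 := hadj _ _ auv; rw [hv] at h2
      simp only [Finset.mem_insert, Finset.mem_singleton] at h1
      tauto
    have hlu : ∀ i : Fin k, f (.inr (.inl i)) = 2 := fun i => by
      have h1 := hmem (.inr (.inl i)); rw [hLlu i] at h1
      have h2 := hadj _ _ (aul i); rw [hu] at h2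
      simp only [Finset.mem_insert, Finset.mem_singleton] at h1
      tauto
    have hlv : ∀ i : Fin (2 * k - 1), f (.inr (.inr (.inr i))) = 2 := fun i => by
      have h1 := hmem (.inr (.inr (.inr i))); rw [hLlv i] at h1
      have h2 := hadj _ _ (avl i); rw [hv] at h2
      simp only [Finset.mem_insert, Finset.mem_singleton] at h1
      tauto
    have hsub : ((Finset.univ.image fun i : Fin k => (Sum.inr (Sum.inl i) : TVert k)) ∪
        (Finset.univ.image fun i : Fin (2 * k - 1) =>
          (Sum.inr (Sum.inr (Sum.inr i)) : TVert k))) ⊆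
        Finset.univ.filter fun v => f v = 2 := by
      intro x hx
      simp only [Finset.mem_union, Finset.mem_image, Finset.mem_univ, true_and] at hx
      rcases hx with ⟨i, rfl⟩ | ⟨i, rfl⟩
      · simp [hlu i]
      · simp [hlv i]
    have hge : k + (2 * k - 1) ≤ colorClass f 2 := by
      have := Finset.card_le_card hsub
      rw [Finset.card_union_of_disjoint (by simp [Finset.disjoint_left])] at this
      rwa [Finset.card_image_of_injective _ (fun a b h => by simpa using h),
        Finset.card_image_of_injective _ (fun a b h => by simpa using h),
        Finset.card_univ, Finset.card_univ, Fintype.card_fin, Fintype.card_fin] at this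
    have := heq 2
    rw [hcard] at this
    omega
  · -- f v = 2 : color 1 is used on the k leaves of w and the 2k-1 leaves of v
    have hw : f (.inl 2) = 3 := by
      have h1 := hmem (.inl 2); rw [hLw] at h1
      have h2 := hadj _ _ avw; rw [hv] at h2
      simp only [Finset.mem_insert, Finset.mem_singleton] at h1
      tauto
    have hlw : ∀ i : Fin k, f (.inr (.inr (.inl i))) = 1 := fun i => by
      have h1 := hmem (.inr (.inr (.inl i))); rw [hLlw i] at h1
      have h2 := hadj _ _ (awl i); rw [hw] at h2
      simp only [Finset.mem_insert, Finset.mem_singleton] at h1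
      tauto
    have hlv : ∀ i : Fin (2 * k - 1), f (.inr (.inr (.inr i))) = 1 := fun i => by
      have h1 := hmem (.inr (.inr (.inr i))); rw [hLlv i] at h1
      have h2 := hadj _ _ (avl i); rw [hv] at h2
      simp only [Finset.mem_insert, Finset.mem_singleton] at h1
      tauto
    have hsub : ((Finset.univ.image fun i : Fin k =>
        (Sum.inr (Sum.inr (Sum.inl i)) : TVert k)) ∪
        (Finset.univ.image fun i : Fin (2 * k - 1) =>
          (Sum.inr (Sum.inr (Sum.inr i)) : TVert k))) ⊆
        Finset.univ.filter fun v => f v = 1 := by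
      intro x hx
      simp only [Finset.mem_union, Finset.mem_image, Finset.mem_univ, true_and] at hx
      rcases hx with ⟨i, rfl⟩ | ⟨i, rfl⟩
      · simp [hlw i]
      · simp [hlv i]
    have hge : k + (2 * k - 1) ≤ colorClass f 1 := by
      have := Finset.card_le_card hsub
      rw [Finset.card_union_of_disjoint (by simp [Finset.disjoint_left])] at this
      rwa [Finset.card_image_of_injective _ (fun a b h => by simpa using h),
        Finset.card_image_of_injective _ (fun a b h => by simpa using h),
        Finset.card_univ, Finset.card_univ, Fintype.card_fin, Fintype.card_fin] at this
    have := heq 1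
    rw [hcard] at this
    omega

theorem stmt_14 (k : ℕ) (hk : 3 ≤ k) :
    TwoChoosable (TTree k) ∧
    (∃ A : Finset (TVert k),
      (∀ x y, (TTree k).Adj x y → (x ∈ A ↔ y ∉ A)) ∧
      2 * A.card = Fintype.card (TVert k)) ∧
    ¬ EquitablyTwoChoosable (TTree k) ∧
    ∀ L : TVert k → Finset ℕ,
      (L (.inl 0) = {1, 3}) →
      (L (.inl 1) = {1, 2}) →
      (L (.inl 2) = {2, 3}) →
      (∀ i : Fin k, L (.inr (.inl i)) = {2, 3}) →
      (∀ i : Fin k, L (.inr (.inr (.inl i))) = {1, 3}) →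
      (∀ i : Fin (2 * k - 1), L (.inr (.inr (.inr i))) = {1, 2}) →
      ¬ ∃ f, IsEquitableColoring (TTree k) L f := by
  refine ⟨?_, ?_, ?_, key_lemma k hk⟩
  · -- TwoChoosable
    intro L hL
    obtain ⟨v0, hv0⟩ := Finset.card_pos.mp (by rw [hL (Sum.inl 1)]; norm_num)
    obtain ⟨u0, hu0, hu0'⟩ := exists_ne_of_card_two _ (hL (.inl 0)) v0
    obtain ⟨w0, hw0, hw0'⟩ := exists_ne_of_card_two _ (hL (.inl 2)) v0
    choose g1 hg1 hg1' using fun i : Fin k =>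
      exists_ne_of_card_two _ (hL (.inr (.inl i))) u0
    choose g2 hg2 hg2' using fun i : Fin k =>
      exists_ne_of_card_two _ (hL (.inr (.inr (.inl i)))) w0
    choose g3 hg3 hg3' using fun i : Fin (2 * k - 1) =>
      exists_ne_of_card_two _ (hL (.inr (.inr (.inr i)))) v0
    refine ⟨Sum.elim ![u0, v0, w0] (Sum.elim g1 (Sum.elim g2 g3)), ?_, ?_⟩
    · rintro (x | (i | (i | i)))
      · fin_cases x <;> simpa
      · simpa using hg1 i
      · simpa using hg2 i
      · simpa using hg3 i
    · intro x y h
      rw [ttree_adj] at h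
      obtain ⟨-, h | h⟩ := h <;>
        rcases h with ⟨rfl, rfl⟩ | ⟨rfl, rfl⟩ | ⟨i, rfl, rfl⟩ | ⟨i, rfl, rfl⟩ | ⟨i, rfl, rfl⟩ <;>
        simp <;>
        first
          | exact hu0' | exact hu0'.symm | exact hw0'.symm | exact hw0'
          | exact (hg1' i).symm | exact hg1' i | exact (hg2' i).symm | exact hg2' i
          | exact (hg3' i).symm | exact hg3' i
  · -- bipartition
    refine ⟨insert (.inl 0) (insert (.inl 2)
      (Finset.univ.image fun i : Fin (2 * k - 1) => (.inr (.inr (.inr i)) : TVert k))), ?_, ?_⟩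
    · intro x y h
      rw [ttree_adj] at h
      obtain ⟨-, h | h⟩ := h <;>
        rcases h with ⟨rfl, rfl⟩ | ⟨rfl, rfl⟩ | ⟨i, rfl, rfl⟩ | ⟨i, rfl, rfl⟩ | ⟨i, rfl, rfl⟩ <;>
        simp
    · rw [Finset.card_insert_of_notMem (by simp), Finset.card_insert_of_notMem (by simp),
        Finset.card_image_of_injective _ (fun a b h => by simpa using h),
        Finset.card_univ, Fintype.card_fin]
      simp only [TVert, Fintype.card_sum, Fintype.card_fin]
      omega
  · -- not equitably 2-choosable
    intro h
    obtain ⟨f, hf⟩ := h (Sum.elim ![({1, 3} : Finset ℕ), {1, 2}, {2, 3}]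
      (Sum.elim (fun _ => {2, 3}) (Sum.elim (fun _ => {1, 3}) (fun _ => {1, 2}))))
      (by rintro (x | (i | (i | i)))
          · fin_cases x <;> rfl
          · rfl
          · rfl
          · rfl)
    exact key_lemma k hk _ rfl rfl rfl (fun _ => rfl) (fun _ => rfl) (fun _ => rfl) ⟨f, hf⟩
end

section
/- Let L be a 2-assignment for a graph G and let f be a proportional L-coloring. Then every color c with η_L(c) even satisfies |f⁻¹(c)| = η_L(c)/2, the number of colors c in the palette with η_L(c) odd is even, and exactly half of the odd colors c satisfy |f⁻¹(c)| = (η_L(c)+1)/2. -/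
open Finset

variable {V : Type*}

theorem stmt_15 [Fintype V] (G : SimpleGraph V) (L : V → Finset ℕ)
    (hL : ∀ v, (L v).card = 2) (f : V → ℕ)
    (hf : IsProportionalColoring G L 2 f) :
    (∀ c ∈ Finset.univ.biUnion L, Even (eta L c) → colorClass f c = eta L c / 2) ∧
    Even ((Finset.univ.biUnion L).filter fun c => Odd (eta L c)).card ∧
    2 * (((Finset.univ.biUnion L).filter fun c => Odd (eta L c)).filter
          fun c => colorClass f c = (eta L c + 1) / 2).card =
      ((Finset.univ.biUnion L).filter fun c => Odd (eta L c)).card := by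

  obtain ⟨⟨hmem, -⟩, hprop⟩ := hf
  set S := Finset.univ.biUnion L with hS
  set O := S.filter (fun c => Odd (eta L c)) with hO
  set A := O.filter (fun c => colorClass f c = (eta L c + 1) / 2) with hA
  have hLS : ∀ v, L v ⊆ S := fun v => Finset.subset_biUnion_of_mem L (Finset.mem_univ v)
  have hex : ∀ c ∈ S, ∃ v, c ∈ L v := by
    intro c hc
    rcases Finset.mem_biUnion.mp hc with ⟨v, -, hv⟩
    exact ⟨v, hv⟩
  have h1 : ∀ c ∈ S, Even (eta L c) → colorClass f c = eta L c / 2 := by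
    intro c hc he
    rcases hprop c (hex c hc) with h | h
    · exact h
    · obtain ⟨m, hm⟩ := he
      omega
  -- each color class size in terms of floor + indicator of A
  have hcc : ∀ c ∈ S, colorClass f c = eta L c / 2 + (if c ∈ A then 1 else 0) := by
    intro c hc
    by_cases hAc : c ∈ A
    · simp only [hAc, if_true]
      have hodd : Odd (eta L c) := (Finset.mem_filter.mp ((Finset.mem_filter.mp hAc).1)).2
      have hcl : colorClass f c = (eta L c + 1) / 2 := (Finset.mem_filter.mp hAc).2
      obtain ⟨m, hm⟩ := hodd
      omega
    · simp only [hAc, if_false, add_zero]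
      by_cases ho : Odd (eta L c)
      · have hOc : c ∈ O := Finset.mem_filter.mpr ⟨hc, ho⟩
        have hne : ¬ colorClass f c = (eta L c + 1) / 2 := fun h =>
          hAc (Finset.mem_filter.mpr ⟨hOc, h⟩)
        rcases hprop c (hex c hc) with h | h
        · exact h
        · obtain ⟨m, hm⟩ := ho
          omega
      · exact h1 c hc (Nat.not_odd_iff_even.mp ho)
  have hAS : A ⊆ S := (Finset.filter_subset _ _).trans (Finset.filter_subset _ _)
  -- sum of eta over palette = 2 * |V|
  have hsum_eta : ∑ c ∈ S, eta L c = 2 * Fintype.card V := by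
    calc ∑ c ∈ S, eta L c
        = ∑ c ∈ S, ∑ v : V, (if c ∈ L v then 1 else 0) := by
          refine Finset.sum_congr rfl fun c _ => ?_
          rw [eta, Finset.card_filter]
      _ = ∑ v : V, ∑ c ∈ S, (if c ∈ L v then 1 else 0) := Finset.sum_comm
      _ = ∑ v : V, (L v).card := by
          refine Finset.sum_congr rfl fun v _ => ?_
          rw [← Finset.card_filter, Finset.filter_mem_eq_inter,
            Finset.inter_eq_right.mpr (hLS v)]
      _ = 2 * Fintype.card V := by
          simp [hL, mul_comm]
  -- sum of color classes = |V|
  have hsum_cc : ∑ c ∈ S, colorClass f c = Fintype.card V := by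
    rw [← Finset.card_univ]
    simp only [colorClass]
    exact (Finset.card_eq_sum_card_fiberwise
      (fun v _ => Finset.mem_biUnion.mpr ⟨v, Finset.mem_univ v, hmem v⟩)).symm
  -- indicator sums
  have hindA : ∑ c ∈ S, (if c ∈ A then 1 else 0) = A.card := by
    rw [← Finset.card_filter, Finset.filter_mem_eq_inter, Finset.inter_eq_right.mpr hAS]
  have hindO : ∑ c ∈ S, (if c ∈ O then 1 else 0) = O.card := by
    rw [← Finset.card_filter, Finset.filter_mem_eq_inter,
      Finset.inter_eq_right.mpr (Finset.filter_subset _ _)]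
  have hsplit : ∑ c ∈ S, colorClass f c = (∑ c ∈ S, eta L c / 2) + A.card := by
    rw [← hindA, ← Finset.sum_add_distrib]
    exact Finset.sum_congr rfl hcc
  have hpar : ∑ c ∈ S, eta L c = (∑ c ∈ S, 2 * (eta L c / 2)) + O.card := by
    rw [← hindO, ← Finset.sum_add_distrib]
    refine Finset.sum_congr rfl fun c hc => ?_
    by_cases ho : Odd (eta L c)
    · have hOc : c ∈ O := Finset.mem_filter.mpr ⟨hc, ho⟩
      obtain ⟨m, hm⟩ := ho
      simp [hOc, hm]
      omega
    · have hOc : c ∉ O := fun h => ho (Finset.mem_filter.mp h).2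
      obtain ⟨m, hm⟩ := Nat.not_odd_iff_even.mp ho
      simp [hOc, hm]
      omega
  have hfloor2 : ∑ c ∈ S, 2 * (eta L c / 2) = 2 * ∑ c ∈ S, eta L c / 2 :=
    Finset.mul_sum _ _ _ |>.symm
  have hkey : 2 * A.card = O.card := by omega
  exact ⟨h1, ⟨A.card, by omega⟩, hkey⟩
end

section
/- Let G be a graph, L a 2-assignment for G, and uv an edge of G with c ∈ L(u) ∩ L(v) and η_L(c) = 2. If G - uv admits a proportional L-coloring, then G admits a proportional L-coloring. -/
open Finset

variable {V : Type*}

theorem stmt_17 [Fintype V] (G : SimpleGraph V) (L : V → Finset ℕ)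
    (hL : ∀ v, (L v).card = 2) (u v : V) (huv : G.Adj u v)
    (c : ℕ) (hcu : c ∈ L u) (hcv : c ∈ L v) (hc : eta L c = 2)
    (h : ∃ f : V → ℕ, IsProportionalColoring (G.deleteEdges {s(u, v)}) L 2 f) :
    ∃ f : V → ℕ, IsProportionalColoring G L 2 f := by
  classical
  obtain ⟨f, ⟨⟨hmem, hprop⟩, hprp⟩⟩ := h
  have hne : u ≠ v := huv.ne
  -- the set of vertices with c in their list is exactly {u, v}
  have hset : (Finset.univ.filter fun w => c ∈ L w) = {u, v} := by
    symm
    apply Finset.eq_of_subset_of_card_le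
    · intro x hx
      simp only [Finset.mem_insert, Finset.mem_singleton] at hx
      rcases hx with rfl | rfl <;> simp [hcu, hcv]
    · rw [show (Finset.univ.filter fun w => c ∈ L w).card = 2 from hc,
        Finset.card_insert_of_notMem (by simp [hne]), Finset.card_singleton]
  -- colorClass f c = 1
  have hcc : colorClass f c = 1 := by
    rcases hprp c ⟨u, hcu⟩ with h1 | h1 <;> rw [h1, hc]
  -- some vertex colored c, and it's u or v
  obtain ⟨w, hw⟩ : ∃ w, f w = c := by
    have : (Finset.univ.filter fun w => f w = c).Nonempty := by
      rw [← Finset.card_pos, ← colorClass, hcc]; norm_num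
    obtain ⟨w, hw⟩ := this
    exact ⟨w, (Finset.mem_filter.mp hw).2⟩
  have hwuv : w = u ∨ w = v := by
    have : w ∈ ({u, v} : Finset V) := by
      rw [← hset]; simp [hw ▸ hmem w]
    simpa using this
  -- f u ≠ f v
  have hfufv : f u ≠ f v := by
    intro heq
    by_cases hfu : f u = c
    · -- both u and v colored c: colorClass ≥ 2
      have h2 : ({u, v} : Finset V) ⊆ (Finset.univ.filter fun w => f w = c) := by
        intro x hx
        simp only [Finset.mem_insert, Finset.mem_singleton] at hx
        rcases hx with rfl | rfl
        · simp [hfu]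
        · simp [← heq, hfu]
      have := Finset.card_le_card h2
      rw [Finset.card_insert_of_notMem (by simp [hne]), Finset.card_singleton] at this
      rw [colorClass] at hcc
      omega
    · rcases hwuv with rfl | rfl
      · exact hfu hw
      · exact hfu (heq.trans hw)
  refine ⟨f, ⟨⟨hmem, ?_⟩, hprp⟩⟩
  intro a b hab
  by_cases he : s(a, b) = s(u, v)
  · rw [Sym2.eq, Sym2.rel_iff'] at he
    rcases he with ⟨rfl, rfl⟩ | ⟨rfl, rfl⟩
    · exact hfufv
    · exact hfufv.symm
  · exact hprop a b (by simp [SimpleGraph.deleteEdges_adj, hab, he])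
end

section
/- Let G be a graph and L a 2-assignment for G such that every proper subgraph of G obtained by deleting a vertex is proportionally colorable with respect to the restricted list assignment. Suppose v ∈ V(G) with L(v) = {c₁, c₂}, both η_L(c₁) and η_L(c₂) odd, and v does not have two distinct neighbors x, y with c₁ ∈ L(x) and c₂ ∈ L(y). Then G admits a proportional L-coloring. -/
open Finset

variable {V : Type*}

lemma card_subtype_filter [Fintype V] [DecidableEq V] (v : V) (P : V → Prop) [DecidablePred P] :
    ((univ : Finset {w : V // w ≠ v}).filter fun a => P a.1).card
      = ((univ.erase v).filter P).card := by
  apply Finset.card_bij (fun a _ => a.1)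
  · rintro ⟨a, ha⟩ hm
    simp only [mem_filter, mem_univ, true_and] at hm
    simp [ha, hm]
  · rintro ⟨a, _⟩ _ ⟨b, _⟩ _ h
    simpa using h
  · intro b hb
    simp only [mem_filter, mem_erase, mem_univ, true_and] at hb
    exact ⟨⟨b, hb.1.1⟩, by simp [hb.1.2, hb.2], rfl⟩

theorem stmt_18 [Fintype V] [DecidableEq V] (G : SimpleGraph V)
    (L : V → Finset ℕ) (hL : ∀ w, (L w).card = 2)
    (hdel : ∀ u : V, ∃ g : {w : V // w ≠ u} → ℕ,
      IsProportionalColoring (G.induce {w : V | w ≠ u}) (fun w => L w.1) 2 g)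
    (v : V) (c₁ c₂ : ℕ) (hv : L v = {c₁, c₂})
    (h₁ : Odd (eta L c₁)) (h₂ : Odd (eta L c₂))
    (hnb : ¬ ∃ x y : V, x ≠ y ∧ G.Adj v x ∧ G.Adj v y ∧ c₁ ∈ L x ∧ c₂ ∈ L y) :
    ∃ f : V → ℕ, IsProportionalColoring G L 2 f := by

  classical
  obtain ⟨g, ⟨hg1, hg2⟩, hg3⟩ := hdel v
  have hc12 : c₁ ≠ c₂ := by
    intro h
    have := hL v
    rw [hv, h] at this
    simp at this
  set P : Prop := ∃ w, ∃ hw : w ≠ v, G.Adj v w ∧ g ⟨w, hw⟩ = c₁ with hP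
  set chosen : ℕ := if P then c₂ else c₁ with hch
  have hchmem : chosen ∈ L v := by
    rw [hv]; by_cases h : P <;> simp [hch, h]
  set f : V → ℕ := fun w => if h : w = v then chosen else g ⟨w, h⟩ with hf
  have hfv : f v = chosen := by simp [hf]
  have hfne : ∀ w (h : w ≠ v), f w = g ⟨w, h⟩ := fun w h => by simp [hf, h]
  have huniv : (univ : Finset V) = insert v (univ.erase v) :=
    (insert_erase (mem_univ v)).symm
  have heta : ∀ c, eta L c
      = eta (fun w : {w : V // w ≠ v} => L w.1) c + (if c ∈ L v then 1 else 0) := by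
    intro c
    rw [eta, eta, card_subtype_filter v (fun w => c ∈ L w)]
    nth_rewrite 1 [huniv]
    rw [filter_insert]
    by_cases hc : c ∈ L v
    · rw [if_pos hc, if_pos hc, card_insert_of_notMem (by simp)]
    · rw [if_neg hc, if_neg hc, add_zero]
  have hcc : ∀ c, colorClass f c = colorClass g c + (if chosen = c then 1 else 0) := by
    intro c
    have e1 : ((univ : Finset {w : V // w ≠ v}).filter fun a => g a = c)
        = ((univ : Finset {w : V // w ≠ v}).filter fun a => f a.1 = c) :=
      filter_congr (fun a _ => by rw [hfne a.1 a.2])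
    have e2 : colorClass g c = ((univ.erase v).filter fun w => f w = c).card := by
      rw [colorClass, e1, card_subtype_filter v (fun w => f w = c)]
    rw [colorClass]
    nth_rewrite 1 [huniv]
    rw [filter_insert, e2]
    by_cases hc : f v = c
    · rw [if_pos hc, if_pos (hfv ▸ hc), card_insert_of_notMem (by simp)]
    · rw [if_neg hc, if_neg (fun h => hc (hfv.trans h)), add_zero]
  refine ⟨f, ⟨⟨?_, ?_⟩, ?_⟩⟩
  · intro w
    by_cases h : w = v
    · subst h; rw [hfv]; exact hchmem
    · rw [hfne w h]; exact hg1 ⟨w, h⟩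
  · have key : ∀ w (h : w ≠ v), G.Adj v w → f v ≠ f w := by
      intro w h hadj
      rw [hfv, hfne w h]
      by_cases hp : P
      · rw [hch, if_pos hp]
        obtain ⟨x, hx, hxadj, hxc⟩ := hp
        intro heq
        have hx1 : c₁ ∈ L x := by
          have := hg1 ⟨x, hx⟩; rw [hxc] at this; exact this
        have hw2 : c₂ ∈ L w := by
          have := hg1 ⟨w, h⟩; rw [← heq] at this; exact this
        have hxw : x ≠ w := by
          intro e; subst e
          rw [hxc] at heq; exact hc12 heq.symm
        exact hnb ⟨x, w, hxw, hxadj, hadj, hx1, hw2⟩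
      · rw [hch, if_neg hp]
        intro heq
        exact hp ⟨w, h, hadj, heq.symm⟩
    intro u w hadj
    by_cases hu : u = v
    · subst hu; exact key w (G.ne_of_adj hadj).symm hadj
    by_cases hw : w = v
    · subst hw
      intro e
      exact key u (G.ne_of_adj hadj.symm).symm hadj.symm e.symm
    · rw [hfne u hu, hfne w hw]
      exact hg2 ⟨u, hu⟩ ⟨w, hw⟩ (by simpa using hadj)
  · intro c ⟨u, hu⟩
    by_cases hcv : c ∈ L v
    · have hcc12 : c = c₁ ∨ c = c₂ := by
        rw [hv] at hcv; simpa using hcv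
      have hodd : Odd (eta L c) := by rcases hcc12 with h | h <;> subst h <;> assumption
      obtain ⟨k, hk⟩ := hodd
      have heta' : eta (fun w : {w : V // w ≠ v} => L w.1) c = 2 * k := by
        have := heta c
        rw [if_pos hcv] at this
        omega
      have hgc : colorClass g c = k := by
        by_cases hw : ∃ a : {w : V // w ≠ v}, c ∈ L a.1
        · rcases hg3 c hw with h | h
          · have h' : colorClass g c
                = eta (fun w : {w : V // w ≠ v} => L w.1) c / 2 := h
            rw [heta'] at h'; omega
          · have h' : colorClass g c
                = (eta (fun w : {w : V // w ≠ v} => L w.1) c + 2 - 1) / 2 := h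
            rw [heta'] at h'; omega
        · have hz : colorClass g c = 0 := by
            rw [colorClass, card_eq_zero, filter_eq_empty_iff]
            intro a _ hga
            exact hw ⟨a, hga ▸ hg1 a⟩
          have hz2 : eta (fun w : {w : V // w ≠ v} => L w.1) c = 0 := by
            rw [eta, card_eq_zero, filter_eq_empty_iff]
            intro a _ hca
            exact hw ⟨a, hca⟩
          omega
      rw [hcc c, hgc, hk]
      split_ifs <;> omega
    · have hne : chosen ≠ c := fun h => hcv (h ▸ hchmem)
      have huv : u ≠ v := fun h => hcv (h ▸ hu)
      have := hg3 c ⟨⟨u, huv⟩, hu⟩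
      rw [hcc c, if_neg hne, add_zero, heta c, if_neg hcv, add_zero]
      exact this
end
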